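/- arXiv:2307.09359 — 7 statements merged into one kernel-verified Lean document; each statement's English description precedes it below -/
import Mathlib

section
/- Let x : ℝ → ℝ^n solve dx/dt = F(x), let ξ̂ : ℝ → ℝ^v solve dξ̂/dt = A ξ̂ + B H(x(t)), and let ẑ(t) = C ξ̂(t) + D H(x(t)) and z(t) = q(x(t)). If the C¹ map T : ℝ^n → ℝ^v satisfies DT(x) F(x) = A T(x) + B H(x) and q(x) = C T(x) + D H(x) for all x ∈ ℝ^n, then ẑ(t) − z(t) = C exp(tA) (ξ̂(0) − T(x(0))) for all t ≥ 0. -/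
/-!
Along any trajectory the observer error `e(t) = ξ̂(t) - T(x(t))` satisfies the linear equation
`e' = A e`: differentiating `T(x(t))` with the chain rule and using the invariance equation
`DT(x) F(x) = A T(x) + B H(x)` cancels the input term `B H(x(t))`. Hence `e(t) = exp(tA) e(0)`,
because `exp(-tA) e(t)` has zero derivative, and the output equation turns `ẑ - z` into `C e`.
-/

open Matrix NormedSpace

attribute [local instance] Matrix.linftyOpNormedAddCommGroup Matrix.linftyOpNormedSpace
  Matrix.linftyOpNormedRing Matrix.linftyOpNormedAlgebra

namespace Matrix

theorem hasDerivAt_mulVec {m k : Type*} [Fintype m] [Fintype k]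
    {M : ℝ → Matrix m k ℝ} {M' : Matrix m k ℝ} {w : ℝ → k → ℝ} {w' : k → ℝ} {t : ℝ}
    (hM : HasDerivAt M M' t) (hw : HasDerivAt w w' t) :
    HasDerivAt (fun s => M s *ᵥ w s) (M' *ᵥ w t + M t *ᵥ w') t := by
  have h := ((mulVecBilin ℝ ℝ).toContinuousBilinearMap).hasDerivAt_of_bilinear
    (fun _ => hM) (fun _ => hw)
  simpa only [LinearMap.toContinuousBilinearMap_apply, mulVecBilin_apply, add_comm] using h

variable {m : Type*} [Fintype m] [DecidableEq m]

theorem eq_exp_smul_mulVec_of_hasDerivAt (A : Matrix m m ℝ) {e : ℝ → m → ℝ}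
    (he : ∀ t, HasDerivAt e (A *ᵥ e t) t) (t : ℝ) :
    e t = exp (t • A) *ᵥ e 0 := by
  have hu : ∀ s, HasDerivAt (fun τ => exp (τ • -A) *ᵥ e τ) 0 s := by
    intro s
    refine (hasDerivAt_mulVec (hasDerivAt_exp_smul_const' (-A) s) (he s)).congr_deriv ?_
    simp only [mulVec_mulVec, neg_mul, neg_mulVec, neg_add_eq_zero]
    exact congrArg (· *ᵥ e s) ((Commute.refl A).neg_right.smul_right s).exp_right.eq
  have hconst : exp (t • -A) *ᵥ e t = e 0 := by
    simpa only [zero_smul, exp_zero, one_mulVec] using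
      is_const_of_deriv_eq_zero (fun s => (hu s).differentiableAt) (fun s => (hu s).deriv) t 0
  have hinv : exp (t • A) * exp (t • -A) = 1 := by
    rw [smul_neg, ← Matrix.exp_add_of_commute _ _ (Commute.refl (t • A)).neg_right,
      add_neg_cancel, exp_zero]
  rw [← hconst, mulVec_mulVec, hinv, one_mulVec]

end Matrix

theorem hasDerivAt_observer_error {E : Type*} [NormedAddCommGroup E] [NormedSpace ℝ E]
    {m p : Type*} [Fintype m] [Fintype p] {F : E → E} {H : E → p → ℝ}
    {A : Matrix m m ℝ} {B : Matrix m p ℝ} {T : E → m → ℝ} (hT : Differentiable ℝ T)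
    (hPDE : ∀ x, fderiv ℝ T x (F x) = A *ᵥ T x + B *ᵥ H x)
    {x : ℝ → E} {ξ : ℝ → m → ℝ} {t : ℝ} (hx : HasDerivAt x (F (x t)) t)
    (hξ : HasDerivAt ξ (A *ᵥ ξ t + B *ᵥ H (x t)) t) :
    HasDerivAt (fun s => ξ s - T (x s)) (A *ᵥ (ξ t - T (x t))) t := by
  have hTx : HasDerivAt (fun s => T (x s)) (A *ᵥ T (x t) + B *ᵥ H (x t)) t := by
    rw [← hPDE]
    exact (hT (x t)).hasFDerivAt.comp_hasDerivAt t hx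
  refine (hξ.sub hTx).congr_deriv ?_
  rw [mulVec_sub]
  abel

/-- If the C¹ map `T` satisfies `DT(x) F(x) = A T(x) + B H(x)` and
`q(x) = C T(x) + D H(x)` for all `x`, then for any solution `x(·)` of `dx/dt = F(x)` and
any solution `ξ̂(·)` of `dξ̂/dt = A ξ̂ + B H(x(t))`, the estimate `ẑ(t) = C ξ̂(t) + D H(x(t))`
and the target `z(t) = q(x(t))` satisfy
`ẑ(t) − z(t) = C exp(t A) (ξ̂(0) − T(x(0)))` for all `t ≥ 0`. -/
theorem stmt1
    {n v p : ℕ}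
    (F : (Fin n → ℝ) → (Fin n → ℝ)) (H : (Fin n → ℝ) → (Fin p → ℝ))
    (q : (Fin n → ℝ) → ℝ)
    (A : Matrix (Fin v) (Fin v) ℝ) (B : Matrix (Fin v) (Fin p) ℝ)
    (C : Fin v → ℝ) (D : Fin p → ℝ)
    (T : (Fin n → ℝ) → (Fin v → ℝ)) (hT : ContDiff ℝ 1 T)
    (hPDE : ∀ x : Fin n → ℝ, fderiv ℝ T x (F x) = A.mulVec (T x) + B.mulVec (H x))
    (hOut : ∀ x : Fin n → ℝ, q x = C ⬝ᵥ T x + D ⬝ᵥ H x)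
    (x : ℝ → (Fin n → ℝ)) (hx : ∀ t : ℝ, HasDerivAt x (F (x t)) t)
    (ξ : ℝ → (Fin v → ℝ))
    (hξ : ∀ t : ℝ, HasDerivAt ξ (A.mulVec (ξ t) + B.mulVec (H (x t))) t) :
    ∀ t : ℝ, 0 ≤ t →
      (C ⬝ᵥ ξ t + D ⬝ᵥ H (x t)) - q (x t)
        = C ⬝ᵥ (NormedSpace.exp (t • A)).mulVec (ξ 0 - T (x 0)) := by
  intro t _
  have herror := eq_exp_smul_mulVec_of_hasDerivAt A
    (fun s => hasDerivAt_observer_error (hT.differentiable one_ne_zero) hPDE (hx s) (hξ s)) t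
  rw [← herror, hOut, dotProduct_sub]
  abel
end

section
/- (Proposition 1, sufficiency.) Suppose there exist row vectors β₀, β₁, …, β_v ∈ ℝ^{1×p} satisfying condition (★): L_F^v q + α₁ L_F^{v−1} q + ⋯ + α_{v−1} L_F q + α_v q = Σ_{ℓ=0}^{v} L_F^{v−ℓ}(β_ℓ H) pointwise on ℝ^n. Then the map T : ℝ^n → ℝ^v with components T_k(x) = L_F^{v−k} q(x) + Σ_{i=1}^{v−k} α_i L_F^{v−k−i} q(x) − Σ_{ℓ=0}^{v−k} L_F^{v−k−ℓ}(β_ℓ H)(x), k = 1,…,v, satisfies DT(x) F(x) = A T(x) + B H(x) and q(x) = C T(x) + D H(x) for all x ∈ ℝ^n, where A is the v×v companion matrix with ones on the subdiagonal, last column (−α_v, −α_{v−1}, …, −α_1)ᵀ and zeros elsewhere, B is the v×p matrix whose k-th row is β_{v−k+1} − α_{v−k+1} β₀, C = (0, …, 0, 1), and D = β₀. -/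
open Matrix Finset

/-- Lie derivative of a scalar function `φ` along the vector field `F`:
`(L_F φ)(x) = Dφ(x) F(x)`. -/
noncomputable def lieD {n : ℕ} (F : (Fin n → ℝ) → (Fin n → ℝ))
    (φ : (Fin n → ℝ) → ℝ) : (Fin n → ℝ) → ℝ :=
  fun x => fderiv ℝ φ x (F x)

lemma lieD_contDiff {n : ℕ} {F : (Fin n → ℝ) → (Fin n → ℝ)} (hF : ContDiff ℝ (⊤ : ℕ∞) F)
    {φ : (Fin n → ℝ) → ℝ} (hφ : ContDiff ℝ (⊤ : ℕ∞) φ) : ContDiff ℝ (⊤ : ℕ∞) (lieD F φ) :=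
  (hφ.fderiv_right (by simp)).clm_apply hF

lemma lieD_iter_contDiff {n : ℕ} {F : (Fin n → ℝ) → (Fin n → ℝ)} (hF : ContDiff ℝ (⊤ : ℕ∞) F)
    {φ : (Fin n → ℝ) → ℝ} (hφ : ContDiff ℝ (⊤ : ℕ∞) φ) (m : ℕ) : ContDiff ℝ (⊤ : ℕ∞) ((lieD F)^[m] φ) := by
  induction m with
  | zero => exact hφ
  | succ m ih => rw [Function.iterate_succ_apply']; exact lieD_contDiff hF ih

lemma dot_contDiff {n p : ℕ} {H : (Fin n → ℝ) → (Fin p → ℝ)} (hH : ContDiff ℝ (⊤ : ℕ∞) H)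
    (b : Fin p → ℝ) : ContDiff ℝ (⊤ : ℕ∞) (fun y => b ⬝ᵥ H y) := by
  simp only [dotProduct]
  exact ContDiff.sum fun j _ => contDiff_const.mul ((contDiff_pi.mp hH) j)

lemma key_deriv {n p : ℕ} {F : (Fin n → ℝ) → (Fin n → ℝ)} (hF : ContDiff ℝ (⊤ : ℕ∞) F)
    {q : (Fin n → ℝ) → ℝ} (hq : ContDiff ℝ (⊤ : ℕ∞) q)
    {H : (Fin n → ℝ) → (Fin p → ℝ)} (hH : ContDiff ℝ (⊤ : ℕ∞) H)
    (α : ℕ → ℝ) (β : ℕ → (Fin p → ℝ)) (m : ℕ) (x : Fin n → ℝ) :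
    fderiv ℝ (fun y => (lieD F)^[m] q y + ∑ i ∈ Finset.Icc 1 m, α i * ((lieD F)^[m - i] q y)
      - ∑ ℓ ∈ Finset.range (m + 1), (lieD F)^[m - ℓ] (fun z => β ℓ ⬝ᵥ H z) y) x (F x)
    = (lieD F)^[m + 1] q x + ∑ i ∈ Finset.Icc 1 m, α i * ((lieD F)^[m - i + 1] q x)
      - ∑ ℓ ∈ Finset.range (m + 1), (lieD F)^[m - ℓ + 1] (fun z => β ℓ ⬝ᵥ H z) x := by
  have hQd : ∀ j : ℕ, DifferentiableAt ℝ ((lieD F)^[j] q) x := fun j =>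
    ((lieD_iter_contDiff hF hq j).differentiable (by simp)).differentiableAt
  have hGd : ∀ ℓ j : ℕ, DifferentiableAt ℝ ((lieD F)^[j] (fun z => β ℓ ⬝ᵥ H z)) x := fun ℓ j =>
    ((lieD_iter_contDiff hF (dot_contDiff hH (β ℓ)) j).differentiable (by simp)).differentiableAt
  have h2 : DifferentiableAt ℝ (fun y => ∑ i ∈ Finset.Icc 1 m, α i * ((lieD F)^[m - i] q y)) x :=
    DifferentiableAt.fun_sum fun i _ => (hQd _).const_mul _
  have h3 : DifferentiableAt ℝ
      (fun y => ∑ ℓ ∈ Finset.range (m + 1), (lieD F)^[m - ℓ] (fun z => β ℓ ⬝ᵥ H z) y) x :=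
    DifferentiableAt.fun_sum fun ℓ _ => hGd _ _
  rw [fderiv_fun_sub ((hQd m).fun_add h2) h3, fderiv_fun_add (hQd m) h2,
    fderiv_fun_sum (fun i _ => (hQd (m - i)).const_mul (α i)),
    fderiv_fun_sum (fun ℓ _ => hGd ℓ (m - ℓ))]
  simp only [ContinuousLinearMap.sub_apply, ContinuousLinearMap.add_apply,
    ContinuousLinearMap.coe_sum', Finset.sum_apply]
  have key : ∀ (φ : (Fin n → ℝ) → ℝ) (j : ℕ), fderiv ℝ ((lieD F)^[j] φ) x (F x)
      = (lieD F)^[j + 1] φ x := by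
    intro φ j
    rw [Function.iterate_succ_apply']
    rfl
  rw [key]
  congr 1
  · congr 1
    refine Finset.sum_congr rfl fun i _ => ?_
    rw [fderiv_const_mul (hQd _) (α i)]
    simp only [ContinuousLinearMap.smul_apply, smul_eq_mul]
    rw [key]
  · exact Finset.sum_congr rfl fun ℓ _ => key _ _

lemma sum_fin_ite {v : ℕ} (t : ℕ) (ht : t < v) (f : Fin v → ℝ) :
    (∑ j : Fin v, if (j : ℕ) = t then f j else 0) = f ⟨t, ht⟩ := by
  rw [Finset.sum_eq_single ⟨t, ht⟩]
  · simp
  · intro j _ hj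
    have : (j : ℕ) ≠ t := fun h => hj (Fin.ext h)
    simp [this]
  · simp

lemma pick_last {v : ℕ} (t : ℕ) (ht : t < v) (u : Fin v → ℝ) :
    (fun j : Fin v => if (j : ℕ) = t then (1 : ℝ) else 0) ⬝ᵥ u = u ⟨t, ht⟩ := by
  simp only [dotProduct, ite_mul, one_mul, zero_mul]
  exact sum_fin_ite t ht u

lemma mulVecA_pos {w : ℕ} (α' : ℕ → ℝ) (u : Fin (w + 1) → ℝ) (k : Fin (w + 1))
    (hk : 0 < (k : ℕ)) :
    Matrix.mulVec (fun i j : Fin (w + 1) => (if (i : ℕ) = (j : ℕ) + 1 then (1 : ℝ) else 0)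
      + (if (j : ℕ) = w then -α' (w + 1 - (i : ℕ)) else 0)) u k
    = u ⟨(k : ℕ) - 1, by omega⟩ + -(α' (w + 1 - (k : ℕ)) * u ⟨w, by omega⟩) := by
  simp only [Matrix.mulVec, dotProduct, add_mul, ite_mul, one_mul, zero_mul, neg_mul,
    Finset.sum_add_distrib]
  congr 1
  · rw [← sum_fin_ite ((k : ℕ) - 1) (by omega) u]
    refine Finset.sum_congr rfl fun j _ => if_congr ?_ rfl rfl
    omega
  · exact sum_fin_ite w (by omega) (fun j => -(α' (w + 1 - (k : ℕ)) * u j))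

lemma mulVecA_zero {w : ℕ} (α' : ℕ → ℝ) (u : Fin (w + 1) → ℝ) (k : Fin (w + 1))
    (hk : (k : ℕ) = 0) :
    Matrix.mulVec (fun i j : Fin (w + 1) => (if (i : ℕ) = (j : ℕ) + 1 then (1 : ℝ) else 0)
      + (if (j : ℕ) = w then -α' (w + 1 - (i : ℕ)) else 0)) u k
    = -(α' (w + 1 - (k : ℕ)) * u ⟨w, by omega⟩) := by
  simp only [Matrix.mulVec, dotProduct, add_mul, ite_mul, one_mul, zero_mul, neg_mul,
    Finset.sum_add_distrib]
  have h1 : (∑ j : Fin (w + 1), if (k : ℕ) = (j : ℕ) + 1 then u j else 0) = 0 :=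
    Finset.sum_eq_zero fun j _ => by rw [if_neg]; omega
  rw [h1, zero_add]
  exact sum_fin_ite w (by omega) (fun j => -(α' (w + 1 - (k : ℕ)) * u j))


/-- **Proposition 1, sufficiency.** If there are row vectors `β₀, …, β_v`
satisfying condition (★):
`L_F^v q + α₁ L_F^{v−1} q + ⋯ + α_v q = Σ_{ℓ=0}^{v} L_F^{v−ℓ}(β_ℓ H)` on `ℝ^n`,
then the map `T` with components
`T_k = L_F^{v−k} q + Σ_{i=1}^{v−k} α_i L_F^{v−k−i} q − Σ_{ℓ=0}^{v−k} L_F^{v−k−ℓ}(β_ℓ H)`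
(for `k = 1, …, v`; below `k : Fin v` with paper index `k+1`) satisfies
`DT(x) F(x) = A T(x) + B H(x)` and `q(x) = C T(x) + D H(x)`, where `A` is the companion
matrix with subdiagonal ones and last column `(−α_v, …, −α_1)ᵀ`, `B` has `k`-th row
`β_{v−k+1} − α_{v−k+1} β₀`, `C = (0, …, 0, 1)` and `D = β₀`. -/
theorem stmt3
    {n v p : ℕ} (hv : 0 < v)
    (F : (Fin n → ℝ) → (Fin n → ℝ)) (hF : ContDiff ℝ (⊤ : ℕ∞) F)
    (H : (Fin n → ℝ) → (Fin p → ℝ)) (hH : ContDiff ℝ (⊤ : ℕ∞) H)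
    (q : (Fin n → ℝ) → ℝ) (hq : ContDiff ℝ (⊤ : ℕ∞) q)
    (α : ℕ → ℝ) (β : ℕ → (Fin p → ℝ))
    (hstar : ∀ x : Fin n → ℝ,
      (lieD F)^[v] q x + ∑ i ∈ Finset.Icc 1 v, α i * ((lieD F)^[v - i] q x)
        = ∑ ℓ ∈ Finset.range (v + 1),
            (lieD F)^[v - ℓ] (fun y => β ℓ ⬝ᵥ H y) x) :
    -- the construction
    ∀ (T : (Fin n → ℝ) → (Fin v → ℝ)),
      (T = fun (x : Fin n → ℝ) (k : Fin v) =>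
        (lieD F)^[v - 1 - (k : ℕ)] q x
          + ∑ i ∈ Finset.Icc 1 (v - 1 - (k : ℕ)), α i * ((lieD F)^[v - 1 - (k : ℕ) - i] q x)
          - ∑ ℓ ∈ Finset.range (v - 1 - (k : ℕ) + 1),
              (lieD F)^[v - 1 - (k : ℕ) - ℓ] (fun y => β ℓ ⬝ᵥ H y) x) →
      ∀ (A : Matrix (Fin v) (Fin v) ℝ),
        (A = fun (i j : Fin v) => (if (i : ℕ) = (j : ℕ) + 1 then (1 : ℝ) else 0)
            + (if (j : ℕ) = v - 1 then -α (v - (i : ℕ)) else 0)) →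
      ∀ (B : Matrix (Fin v) (Fin p) ℝ),
        (B = fun (k : Fin v) (j : Fin p) => β (v - (k : ℕ)) j - α (v - (k : ℕ)) * β 0 j) →
      ∀ (C : Fin v → ℝ), (C = fun (j : Fin v) => if (j : ℕ) = v - 1 then (1 : ℝ) else 0) →
      ∀ (D : Fin p → ℝ), (D = β 0) →
        (∀ x : Fin n → ℝ, fderiv ℝ T x (F x) = A.mulVec (T x) + B.mulVec (H x)) ∧
        (∀ x : Fin n → ℝ, q x = C ⬝ᵥ T x + D ⬝ᵥ H x) := by
  obtain ⟨w, rfl⟩ : ∃ w, v = w + 1 := ⟨v - 1, by omega⟩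
  intro T hT A hA B hB C hC D hD
  subst hT hA hB hC hD
  simp only [Nat.add_sub_cancel] at *
  have hQd : ∀ (x : Fin n → ℝ) (j : ℕ), DifferentiableAt ℝ ((lieD F)^[j] q) x := fun x j =>
    ((lieD_iter_contDiff hF hq j).differentiable (by simp)).differentiableAt
  have hGd : ∀ (x : Fin n→ ℝ) (ℓ j : ℕ),
      DifferentiableAt ℝ ((lieD F)^[j] (fun z => β ℓ ⬝ᵥ H z)) x := fun x ℓ j =>
    ((lieD_iter_contDiff hF (dot_contDiff hH (β ℓ)) j).differentiable (by simp)).differentiableAt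
  have hw : w < w + 1 := by omega
  -- value of the last component
  have hTlast : ∀ x : Fin n → ℝ,
      ((lieD F)^[w - (w:ℕ)] q x
        + ∑ i ∈ Finset.Icc 1 (w - (w:ℕ)), α i * ((lieD F)^[w - (w:ℕ) - i] q x)
        - ∑ ℓ ∈ Finset.range (w - (w:ℕ) + 1),
            (lieD F)^[w - (w:ℕ) - ℓ] (fun y => β ℓ ⬝ᵥ H y) x)
      = q x - β 0 ⬝ᵥ H x := by
    intro x
    simp [Nat.sub_self]
  constructor
  · -- the ODE identity
    intro x
    rw [fderiv_pi (φ := fun (k : Fin (w+1)) (x : Fin n → ℝ) =>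
        (lieD F)^[w - (k : ℕ)] q x
          + ∑ i ∈ Finset.Icc 1 (w - (k : ℕ)), α i * ((lieD F)^[w - (k : ℕ) - i] q x)
          - ∑ ℓ ∈ Finset.range (w - (k : ℕ) + 1),
              (lieD F)^[w - (k : ℕ) - ℓ] (fun y => β ℓ ⬝ᵥ H y) x)
      (fun k => (((hQd x _).add (DifferentiableAt.fun_sum fun i _ => (hQd x _).const_mul _)).sub
        (DifferentiableAt.fun_sum fun ℓ _ => hGd x _ _)))]
    funext k
    simp only [ContinuousLinearMap.pi_apply, Pi.add_apply]
    rw [key_deriv hF hq hH α β (w - (k : ℕ)) x]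
    -- RHS expansion
    have hBmul : Matrix.mulVec
        (fun (k : Fin (w + 1)) (j : Fin p) => β (w + 1 - (k : ℕ)) j - α (w + 1 - (k : ℕ)) * β 0 j)
        (H x) k = β (w + 1 - (k : ℕ)) ⬝ᵥ H x - α (w + 1 - (k : ℕ)) * (β 0 ⬝ᵥ H x) := by
      simp [Matrix.mulVec, dotProduct, sub_mul, Finset.sum_sub_distrib, Finset.mul_sum, mul_assoc]
    rw [hBmul]
    have hku : (k : ℕ) ≤ w := by omega
    rcases Nat.eq_zero_or_pos (k : ℕ) with hk | hk
    · -- k = 0 : uses hstar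
      rw [mulVecA_zero α _ k hk]
      have hlast : ((lieD F)^[w - ((⟨w, by omega⟩ : Fin (w + 1)) : ℕ)] q x
          + ∑ i ∈ Finset.Icc 1 (w - ((⟨w, by omega⟩ : Fin (w + 1)) : ℕ)),
              α i * ((lieD F)^[w - ((⟨w, by omega⟩ : Fin (w + 1)) : ℕ) - i] q x)
          - ∑ ℓ ∈ Finset.range (w - ((⟨w, by omega⟩ : Fin (w + 1)) : ℕ) + 1),
              (lieD F)^[w - ((⟨w, by omega⟩ : Fin (w + 1)) : ℕ) - ℓ] (fun y => β ℓ ⬝ᵥ H y) x)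
          = q x - β 0 ⬝ᵥ H x := hTlast x
      rw [hlast, hk]
      simp only [Nat.sub_zero]
      have hstar' := hstar x
      rw [Finset.sum_Icc_succ_top (by omega : 1 ≤ w + 1),
        Finset.sum_range_succ] at hstar'
      simp only [Nat.add_sub_cancel, Nat.sub_self, Function.iterate_zero, id_eq] at hstar'
      have e1 : ∑ i ∈ Finset.Icc 1 w, α i * ((lieD F)^[w - i + 1] q x)
          = ∑ i ∈ Finset.Icc 1 w, α i * ((lieD F)^[w + 1 - i] q x) := by
        refine Finset.sum_congr rfl fun i hi => ?_
        rw [Finset.mem_Icc] at hi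
        rw [show w - i + 1 = w + 1 - i by omega]
      have e2 : ∑ ℓ ∈ Finset.range (w + 1), (lieD F)^[w - ℓ + 1] (fun y => β ℓ ⬝ᵥ H y) x
          = ∑ ℓ ∈ Finset.range (w + 1), (lieD F)^[w + 1 - ℓ] (fun y => β ℓ ⬝ᵥ H y) x := by
        refine Finset.sum_congr rfl fun ℓ hℓ => ?_
        rw [Finset.mem_range] at hℓ
        rw [show w - ℓ + 1 = w + 1 - ℓ by omega]
      rw [e1, e2]
      linarith [hstar']
    · -- k ≥ 1 : telescoping, no hstar needed
      rw [mulVecA_pos α _ k hk]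
      have hlast : ((lieD F)^[w - ((⟨w, by omega⟩ : Fin (w + 1)) : ℕ)] q x
          + ∑ i ∈ Finset.Icc 1 (w - ((⟨w, by omega⟩ : Fin (w + 1)) : ℕ)),
              α i * ((lieD F)^[w - ((⟨w, by omega⟩ : Fin (w + 1)) : ℕ) - i] q x)
          - ∑ ℓ ∈ Finset.range (w - ((⟨w, by omega⟩ : Fin (w + 1)) : ℕ) + 1),
              (lieD F)^[w - ((⟨w, by omega⟩ : Fin (w + 1)) : ℕ) - ℓ] (fun y => β ℓ ⬝ᵥ H y) x)
          = q x - β 0 ⬝ᵥ H x := hTlast x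
      rw [hlast]
      -- expand u ⟨k-1, _⟩
      have hval : ((⟨(k : ℕ) - 1, by omega⟩ : Fin (w + 1)) : ℕ) = (k : ℕ) - 1 := rfl
      show (lieD F)^[w - (k : ℕ) + 1] q x
          + ∑ i ∈ Finset.Icc 1 (w - (k : ℕ)), α i * ((lieD F)^[w - (k : ℕ) - i + 1] q x)
          - ∑ ℓ ∈ Finset.range (w - (k : ℕ) + 1),
              (lieD F)^[w - (k : ℕ) - ℓ + 1] (fun y => β ℓ ⬝ᵥ H y) x
        = ((lieD F)^[w - ((k : ℕ) - 1)] q x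
            + ∑ i ∈ Finset.Icc 1 (w - ((k : ℕ) - 1)), α i * ((lieD F)^[w - ((k : ℕ) - 1) - i] q x)
            - ∑ ℓ ∈ Finset.range (w - ((k : ℕ) - 1) + 1),
                (lieD F)^[w - ((k : ℕ) - 1) - ℓ] (fun y => β ℓ ⬝ᵥ H y) x)
          + -(α (w + 1 - (k : ℕ)) * (q x - β 0 ⬝ᵥ H x))
          + (β (w + 1 - (k : ℕ)) ⬝ᵥ H x - α (w + 1 - (k : ℕ)) * (β 0 ⬝ᵥ H x))
      rw [show w - ((k : ℕ) - 1) = w - (k : ℕ) + 1 by omega,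
        show w + 1 - (k : ℕ) = w - (k : ℕ) + 1 by omega,
        Finset.sum_Icc_succ_top (by omega : 1 ≤ w - (k : ℕ) + 1)
          (fun i => α i * ((lieD F)^[w - (k : ℕ) + 1 - i] q x)),
        Finset.sum_range_succ
          (fun ℓ => (lieD F)^[w - (k : ℕ) + 1 - ℓ] (fun y => β ℓ ⬝ᵥ H y) x) (w - (k : ℕ) + 1)]
      simp only [Nat.add_sub_cancel, Nat.sub_self, Function.iterate_zero, id_eq]
      have e1 : ∑ i ∈ Finset.Icc 1 (w - (k : ℕ)), α i * ((lieD F)^[w - (k : ℕ) - i + 1] q x)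
          = ∑ i ∈ Finset.Icc 1 (w - (k : ℕ)), α i * ((lieD F)^[w - (k : ℕ) + 1 - i] q x) := by
        refine Finset.sum_congr rfl fun i hi => ?_
        rw [Finset.mem_Icc] at hi
        rw [show w - (k : ℕ) - i + 1 = w - (k : ℕ) + 1 - i by omega]
      have e2 : ∑ ℓ ∈ Finset.range (w - (k : ℕ) + 1),
            (lieD F)^[w - (k : ℕ) - ℓ + 1] (fun y => β ℓ ⬝ᵥ H y) x
          = ∑ ℓ ∈ Finset.range (w - (k : ℕ) + 1),
            (lieD F)^[w - (k : ℕ) + 1 - ℓ] (fun y => β ℓ ⬝ᵥ H y) x := by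
        refine Finset.sum_congr rfl fun ℓ hℓ => ?_
        rw [Finset.mem_range] at hℓ
        rw [show w - (k : ℕ) - ℓ + 1 = w - (k : ℕ) + 1 - ℓ by omega]
      rw [e1, e2]
      ring
  · -- the output identity
    intro x
    rw [pick_last w hw]
    show q x = ((lieD F)^[w - w] q x
        + ∑ i ∈ Finset.Icc 1 (w - w), α i * ((lieD F)^[w - w - i] q x)
        - ∑ ℓ ∈ Finset.range (w - w + 1),
            (lieD F)^[w - w - ℓ] (fun y => β ℓ ⬝ᵥ H y) x) + β 0 ⬝ᵥ H x
    rw [hTlast x]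
    ring
end

section
/- For the translated CSTR model in deviation variables x = (c_A', c_B', θ', θ_j') with drift F(x) = ( −(F/V) c_A' − ΔR(x), −(F/V) c_B' − ΔR(x), −(F/V) θ' + ((−ΔH_R)/(ρ c_p)) ΔR(x) − (U𝒜/(ρ c_p V))(θ' − θ_j'), −(F_j/V_j) θ_j' + (U𝒜/(ρ_j c_{pj} V_j))(θ' − θ_j') ), where ΔR is any smooth scalar function of the state, the linear functional T(x) = c_A' + c_B' + (2 ρ c_p/(−ΔH_R)) θ' + (2 ρ_j c_{pj} V_j/((−ΔH_R) V)) θ_j' satisfies the identity ∇T · F(x) = −(F/V) T(x) − (2 ρ_j c_{pj} V_j/((−ΔH_R) V)) (F_j/V_j − F/V) θ_j' for all x ∈ ℝ⁴; i.e., T satisfies the functional observer condition DT(x) F(x) = A T(x) + B H(x) with scalar A = −F/V, outputs H(x) = (θ', θ_j'), and B = (0, −(2 ρ_j c_{pj} V_j/((−ΔH_R) V))(F_j/V_j − F/V)). -/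
open Matrix

/-- For the translated CSTR model in deviation variables
`x = (c_A', c_B', θ', θ_j')` with the stated drift (with `mΔH` denoting `(−ΔH_R) > 0` and
`ΔR` an arbitrary smooth reaction-rate deviation), the linear functional
`T(x) = c_A' + c_B' + (2ρc_p/(−ΔH_R)) θ' + (2ρ_j c_{pj} V_j/((−ΔH_R)V)) θ_j'`
satisfies `∇T · 𝓕(x) = −(F/V) T(x) − (2ρ_j c_{pj} V_j/((−ΔH_R)V))(F_j/V_j − F/V) θ_j'`
for all `x ∈ ℝ⁴`, i.e. the functional observer condition `DT(x) 𝓕(x) = A T(x) + B H(x)`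
with scalar `A = −F/V`, outputs `H(x) = (θ', θ_j')`, and
`B = (0, −(2ρ_j c_{pj} V_j/((−ΔH_R)V))(F_j/V_j − F/V))`. -/
theorem stmt8
    (Fw Fj V Vj ρ ρj cp cpj UA mΔH : ℝ)
    (hFw : 0 < Fw) (hFj : 0 < Fj) (hV : 0 < V) (hVj : 0 < Vj)
    (hρ : 0 < ρ) (hρj : 0 < ρj) (hcp : 0 < cp) (hcpj : 0 < cpj)
    (hUA : 0 < UA) (hmΔH : 0 < mΔH)
    (ΔR : (Fin 4 → ℝ) → ℝ) (hΔR : ContDiff ℝ (⊤ : ℕ∞) ΔR)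
    (𝓕 : (Fin 4 → ℝ) → (Fin 4 → ℝ))
    (h𝓕 : 𝓕 = fun x => ![
      -(Fw / V) * x 0 - ΔR x,
      -(Fw / V) * x 1 - ΔR x,
      -(Fw / V) * x 2 + (mΔH / (ρ * cp)) * ΔR x - (UA / (ρ * cp * V)) * (x 2 - x 3),
      -(Fj / Vj) * x 3 + (UA / (ρj * cpj * Vj)) * (x 2 - x 3)])
    (T : (Fin 4 → ℝ) → ℝ)
    (hTdef : T = fun x =>
      x 0 + x 1 + (2 * ρ * cp / mΔH) * x 2 + (2 * ρj * cpj * Vj / (mΔH * V)) * x 3) :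
    ∀ x : Fin 4 → ℝ,
      fderiv ℝ T x (𝓕 x)
        = -(Fw / V) * T x
            - (2 * ρj * cpj * Vj / (mΔH * V)) * (Fj / Vj - Fw / V) * x 3 := by
  intro x
  set c2 := 2 * ρ * cp / mΔH
  set c3 := 2 * ρj * cpj * Vj / (mΔH * V)
  set L : (Fin 4 → ℝ) →L[ℝ] ℝ :=
    (ContinuousLinearMap.proj 0 : (Fin 4 → ℝ) →L[ℝ] ℝ) + (ContinuousLinearMap.proj 1 : (Fin 4 → ℝ) →L[ℝ] ℝ) +
      c2 • (ContinuousLinearMap.proj 2 : (Fin 4 → ℝ) →L[ℝ] ℝ) + c3 • (ContinuousLinearMap.proj 3 : (Fin 4 → ℝ) →L[ℝ] ℝ) with hL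
  have hTL : T = fun x => L x := by
    funext y
    simp [hTdef, hL, ContinuousLinearMap.proj_apply]
  have hfd : fderiv ℝ T x = L := by rw [hTL]; exact L.fderiv
  rw [hfd, h𝓕, hTdef]
  simp only [hL, ContinuousLinearMap.add_apply, ContinuousLinearMap.smul_apply,
    ContinuousLinearMap.proj_apply, smul_eq_mul, Matrix.cons_val_zero, Matrix.cons_val_one,
    Matrix.head_cons, Matrix.cons_val_two, Matrix.tail_cons, Matrix.cons_val_three]
  have hρcp : ρ * cp ≠ 0 := by positivity
  have : (mΔH : ℝ) ≠ 0 := ne_of_gt hmΔH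
  simp only [c2, c3]
  field_simp
  ring
end

section
/- For the CSTR model in deviation variables, the gradient of the linear functional T(x) = c_A' + c_B' + (2 ρ c_p/(−ΔH_R)) θ' + (2 ρ_j c_{pj} V_j/((−ΔH_R) V)) θ_j', namely ∇T = (1, 1, 2 ρ c_p/(−ΔH_R), 2 ρ_j c_{pj} V_j/((−ΔH_R) V)), annihilates both disturbance directions of the system: ∇T · e₁ = 0 where e₁ = (−1, −1, (−ΔH_R)/(ρ c_p), 0) is the direction in which the reaction-rate uncertainty w₁ enters, and ∇T · e₂(x) = 0 for all x, where e₂(x) = (0, 0, −(𝒜/(ρ c_p V)) δθ(x), (𝒜/(ρ_j c_{pj} V_j)) δθ(x)) is the direction in which the heat-transfer-coefficient uncertainty w₂ enters, δθ(x) being the reactor–jacket temperature difference. Since the measured outputs θ', θ_j' are disturbance-free (K = 0), the decoupling conditions DT(x) E(x) = B K(x) and D K(x) = 0 hold with E(x) = [e₁, e₂(x)]. -/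
open Matrix

/-- For the CSTR model in deviation variables, the gradient
`∇T = (1, 1, 2ρc_p/(−ΔH_R), 2ρ_j c_{pj} V_j/((−ΔH_R)V))` of the linear functional `T`
annihilates both disturbance directions: `∇T · e₁ = 0` where
`e₁ = (−1, −1, (−ΔH_R)/(ρc_p), 0)` (direction of the reaction-rate uncertainty `w₁`), and
`∇T · e₂(x) = 0` for all `x`, where
`e₂(x) = (0, 0, −(𝒜/(ρc_pV)) δθ(x), (𝒜/(ρ_j c_{pj} V_j)) δθ(x))` (direction of the
heat-transfer-coefficient uncertainty `w₂`). Since the measured outputs are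
disturbance-free (`K = 0`), the decoupling conditions `DT(x) E(x) = B K(x)` and
`D K(x) = 0` hold with `E(x) = [e₁, e₂(x)]`. -/
theorem stmt9
    (Fw Fj V Vj ρ ρj cp cpj Aht mΔH : ℝ)
    (hFw : 0 < Fw) (hFj : 0 < Fj) (hV : 0 < V) (hVj : 0 < Vj)
    (hρ : 0 < ρ) (hρj : 0 < ρj) (hcp : 0 < cp) (hcpj : 0 < cpj)
    (hA : 0 < Aht) (hmΔH : 0 < mΔH)
    (δθ : (Fin 4 → ℝ) → ℝ)
    (g : Fin 4 → ℝ)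
    (hg : g = ![1, 1, 2 * ρ * cp / mΔH, 2 * ρj * cpj * Vj / (mΔH * V)])
    (T : (Fin 4 → ℝ) → ℝ)
    (hTdef : T = fun x =>
      x 0 + x 1 + (2 * ρ * cp / mΔH) * x 2 + (2 * ρj * cpj * Vj / (mΔH * V)) * x 3)
    (e₁ : Fin 4 → ℝ) (he₁ : e₁ = ![-1, -1, mΔH / (ρ * cp), 0])
    (e₂ : (Fin 4 → ℝ) → (Fin 4 → ℝ))
    (he₂ : e₂ = fun x =>
      ![0, 0, -(Aht / (ρ * cp * V)) * δθ x, (Aht / (ρj * cpj * Vj)) * δθ x])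
    (E : (Fin 4 → ℝ) → Matrix (Fin 4) (Fin 2) ℝ)
    (hE : E = fun x => Matrix.of fun i j => ![e₁ i, e₂ x i] j)
    (K : (Fin 4 → ℝ) → Matrix (Fin 2) (Fin 2) ℝ)
    (hK : K = fun _ => (0 : Matrix (Fin 2) (Fin 2) ℝ))
    (B : Fin 2 → ℝ) (D : Fin 2 → ℝ) :
    (g ⬝ᵥ e₁ = 0) ∧
    (∀ x : Fin 4 → ℝ, g ⬝ᵥ e₂ x = 0) ∧
    (∀ (x : Fin 4 → ℝ) (w : Fin 2 → ℝ),
      fderiv ℝ T x ((E x).mulVec w) = B ⬝ᵥ ((K x).mulVec w)) ∧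
    (∀ x : Fin 4 → ℝ, D ᵥ* K x = 0) := by

  have hmΔH' := hmΔH.ne'
  have hρ' := hρ.ne'
  have hcp' := hcp.ne'
  have hV' := hV.ne'
  have hρj' := hρj.ne'
  have hcpj' := hcpj.ne'
  have hVj' := hVj.ne'
  have h1 : g ⬝ᵥ e₁ = 0 := by
    subst hg he₁
    simp [dotProduct, Fin.sum_univ_four]
    field_simp
    ring
  have h2 : ∀ x : Fin 4 → ℝ, g ⬝ᵥ e₂ x = 0 := by
    intro x
    subst hg he₂
    simp [dotProduct, Fin.sum_univ_four]
    field_simp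
    ring
  refine ⟨h1, h2, ?_, ?_⟩
  · intro x w
    set a : ℝ := 2 * ρ * cp / mΔH
    set b : ℝ := 2 * ρj * cpj * Vj / (mΔH * V)
    set L : (Fin 4 → ℝ) →L[ℝ] ℝ :=
      (ContinuousLinearMap.proj (R := ℝ) (φ := fun _ : Fin 4 => ℝ) 0)
        + (ContinuousLinearMap.proj (R := ℝ) (φ := fun _ : Fin 4 => ℝ) 1)
        + a • (ContinuousLinearMap.proj (R := ℝ) (φ := fun _ : Fin 4 => ℝ) 2)
        + b • (ContinuousLinearMap.proj (R := ℝ) (φ := fun _ : Fin 4 => ℝ) 3) with hL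
    have hTL : T = fun y => L y := by
      funext y
      simp [hTdef, hL, ContinuousLinearMap.add_apply, ContinuousLinearMap.smul_apply,
        ContinuousLinearMap.proj_apply, smul_eq_mul]
    have hfd : fderiv ℝ T x = L := by
      rw [hTL]; exact L.fderiv
    rw [hfd, hK]
    have : L ((E x).mulVec w) = w 0 * (g ⬝ᵥ e₁) + w 1 * (g ⬝ᵥ e₂ x) := by
      subst hg hE
      simp [hL, Matrix.mulVec, dotProduct, Fin.sum_univ_two, Fin.sum_univ_four,
        ContinuousLinearMap.add_apply, ContinuousLinearMap.smul_apply,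
        ContinuousLinearMap.proj_apply, smul_eq_mul]
      ring
    rw [this, h1, h2]
    simp [Matrix.mulVec]
  · intro x
    rw [hK]
    simp
end

section
/- For the CSTR model in deviation variables with drift F(x) as above, disturbance matrix E(x) = [e₁, e₂(x)], outputs y₁' = θ', y₂' = θ_j', and estimated quantity z = c_A' + c_B', the scalar observer dξ̂/dt = −(F/V) ξ̂ − (2 ρ_j c_{pj} V_j/((−ΔH_R) V))(F_j/V_j − F/V) y₂', ẑ = ξ̂ − (2 ρ c_p/(−ΔH_R)) y₁' − (2 ρ_j c_{pj} V_j/((−ΔH_R) V)) y₂' satisfies, for every bounded continuous disturbance signal W = (w₁, w₂) : ℝ → ℝ² and every solution x(·) of dx/dt = F(x) + E(x) W(t): ẑ(t) − z(t) = e^{−(F/V)t} (ξ̂(0) − T(x(0))) for all t ≥ 0, where T(x) = c_A' + c_B' + (2 ρ c_p/(−ΔH_R)) θ' + (2 ρ_j c_{pj} V_j/((−ΔH_R) V)) θ_j'; in particular ẑ(t) − z(t) → 0 as t → ∞ regardless of w₁, w₂. -/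
open Matrix Filter

/-- For the CSTR model in deviation variables with the stated drift,
disturbance matrix `E(x) = [e₁, e₂(x)]`, outputs `y₁' = θ'`, `y₂' = θ_j'` and estimated
quantity `z = c_A' + c_B'`, the scalar observer
`dξ̂/dt = −(F/V) ξ̂ − (2ρ_j c_{pj} V_j/((−ΔH_R)V))(F_j/V_j − F/V) y₂'`,
`zhat = ξ̂ − (2ρc_p/(−ΔH_R)) y₁' − (2ρ_j c_{pj} V_j/((−ΔH_R)V)) y₂'`
satisfies, for every bounded continuous disturbance `W = (w₁, w₂)` and every solution
`x(·)` of `dx/dt = 𝓕(x) + E(x) W(t)`: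
`zhat(t) − z(t) = e^{−(F/V)t}(ξ̂(0) − T(x(0)))` for all `t ≥ 0`; in particular
`zhat(t) − z(t) → 0` as `t → ∞` regardless of `w₁, w₂`. -/
theorem stmt10
    (Fw Fj V Vj ρ ρj cp cpj UA Aht mΔH : ℝ)
    (hFw : 0 < Fw) (hFj : 0 < Fj) (hV : 0 < V) (hVj : 0 < Vj)
    (hρ : 0 < ρ) (hρj : 0 < ρj) (hcp : 0 < cp) (hcpj : 0 < cpj)
    (hUA : 0 < UA) (hA : 0 < Aht) (hmΔH : 0 < mΔH)
    (ΔR : (Fin 4 → ℝ) → ℝ) (hΔR : ContDiff ℝ (⊤ : ℕ∞) ΔR)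
    (δθ : (Fin 4 → ℝ) → ℝ)
    (𝓕 : (Fin 4 → ℝ) → (Fin 4 → ℝ))
    (h𝓕 : 𝓕 = fun x => ![
      -(Fw / V) * x 0 - ΔR x,
      -(Fw / V) * x 1 - ΔR x,
      -(Fw / V) * x 2 + (mΔH / (ρ * cp)) * ΔR x - (UA / (ρ * cp * V)) * (x 2 - x 3),
      -(Fj / Vj) * x 3 + (UA / (ρj * cpj * Vj)) * (x 2 - x 3)])
    (e₁ : Fin 4 → ℝ) (he₁ : e₁ = ![-1, -1, mΔH / (ρ * cp), 0])
    (e₂ : (Fin 4 → ℝ) → (Fin 4 → ℝ))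
    (he₂ : e₂ = fun x =>
      ![0, 0, -(Aht / (ρ * cp * V)) * δθ x, (Aht / (ρj * cpj * Vj)) * δθ x])
    (E : (Fin 4 → ℝ) → Matrix (Fin 4) (Fin 2) ℝ)
    (hE : E = fun x => Matrix.of fun i j => ![e₁ i, e₂ x i] j)
    (T : (Fin 4 → ℝ) → ℝ)
    (hTdef : T = fun x =>
      x 0 + x 1 + (2 * ρ * cp / mΔH) * x 2 + (2 * ρj * cpj * Vj / (mΔH * V)) * x 3)
    (W : ℝ → (Fin 2 → ℝ)) (hWc : Continuous W) (hWb : ∃ M : ℝ, ∀ t : ℝ, ‖W t‖ ≤ M)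
    (x : ℝ → (Fin 4 → ℝ))
    (hx : ∀ t : ℝ, HasDerivAt x (𝓕 (x t) + (E (x t)).mulVec (W t)) t)
    (ξ : ℝ → ℝ)
    (hξ : ∀ t : ℝ, HasDerivAt ξ
      (-(Fw / V) * ξ t
        - (2 * ρj * cpj * Vj / (mΔH * V)) * (Fj / Vj - Fw / V) * (x t 3)) t)
    (zhat : ℝ → ℝ)
    (hzhat : zhat = fun t => ξ t - (2 * ρ * cp / mΔH) * (x t 2)
      - (2 * ρj * cpj * Vj / (mΔH * V)) * (x t 3))
    (z : ℝ → ℝ) (hz : z = fun t => x t 0 + x t 1) :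
    (∀ t : ℝ, 0 ≤ t →
      zhat t - z t = Real.exp (-(Fw / V) * t) * (ξ 0 - T (x 0))) ∧
    Tendsto (fun t => zhat t - z t) atTop (nhds 0) := by

  have hVne : V ≠ 0 := hV.ne'
  have hmne : mΔH ≠ 0 := hmΔH.ne'
  have hρne : ρ ≠ 0 := hρ.ne'
  have hcpne : cp ≠ 0 := hcp.ne'
  have hρjne : ρj ≠ 0 := hρj.ne'
  have hcpjne : cpj ≠ 0 := hcpj.ne'
  have hVjne : Vj ≠ 0 := hVj.ne'
  set e : ℝ → ℝ := fun t => ξ t - T (x t) with he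
  -- coordinatewise derivatives
  have hxi : ∀ t (i : Fin 4), HasDerivAt (fun s => x s i)
      ((𝓕 (x t) + (E (x t)).mulVec (W t)) i) t := fun t i => hasDerivAt_pi.mp (hx t) i
  -- derivative of the error
  have hed : ∀ t, HasDerivAt e (-(Fw / V) * e t) t := by
    intro t
    have hT : HasDerivAt (fun s => T (x s))
        ((𝓕 (x t) + (E (x t)).mulVec (W t)) 0 + (𝓕 (x t) + (E (x t)).mulVec (W t)) 1
          + (2 * ρ * cp / mΔH) * ((𝓕 (x t) + (E (x t)).mulVec (W t)) 2)
          + (2 * ρj * cpj * Vj / (mΔH * V)) * ((𝓕 (x t) + (E (x t)).mulVec (W t)) 3)) t := by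
      rw [hTdef]
      exact (((hxi t 0).add (hxi t 1)).add ((hxi t 2).const_mul _)).add
        ((hxi t 3).const_mul _)
    have : HasDerivAt (fun s => ξ s - T (x s)) _ t := (hξ t).sub hT
    convert this using 1
    simp only [he, hTdef, h𝓕, hE, he₁, he₂, Matrix.mulVec, dotProduct,
      Fin.sum_univ_two, Matrix.of_apply, Pi.add_apply, Matrix.cons_val_zero,
      Matrix.cons_val_one, Matrix.head_cons, Matrix.cons_val_two, Matrix.tail_cons,
      Matrix.cons_val_three, Matrix.head_fin_const]
    field_simp
    ring
  -- the auxiliary constant function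
  set g : ℝ → ℝ := fun t => Real.exp ((Fw / V) * t) * e t with hg
  have hgd : ∀ t, HasDerivAt g 0 t := by
    intro t
    have h1 : HasDerivAt (fun s => Real.exp ((Fw / V) * s))
        ((Fw / V) * Real.exp ((Fw / V) * t)) t := by
      have := ((hasDerivAt_id t).const_mul (Fw / V)).exp
      simpa [mul_comm] using this
    have : HasDerivAt (fun s => Real.exp ((Fw / V) * s) * e s) _ t := h1.mul (hed t)
    convert this using 1
    ring
  have hgc : ∀ t, g t = g 0 :=
    fun t => is_const_of_deriv_eq_zero (fun s => (hgd s).differentiableAt)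
      (fun s => (hgd s).deriv) t 0
  have hformula : ∀ t : ℝ, e t = Real.exp (-(Fw / V) * t) * e 0 := by
    intro t
    have h1 : Real.exp ((Fw / V) * t) * e t = e 0 := by
      have := hgc t
      simpa [hg] using this
    have h2 : Real.exp (-(Fw / V) * t) = (Real.exp ((Fw / V) * t))⁻¹ := by
      rw [← Real.exp_neg]; ring_nf
    rw [h2, eq_comm, inv_mul_eq_iff_eq_mul₀ (Real.exp_ne_zero _), ← h1]
  have hzz : ∀ t : ℝ, zhat t - z t = e t := by
    intro t
    simp only [he, hzhat, hz, hTdef]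
    ring
  have he0 : e 0 = ξ 0 - T (x 0) := rfl
  constructor
  · intro t _
    rw [hzz t, hformula t, he0]
  · have hlim : Tendsto (fun t : ℝ => Real.exp (-(Fw / V) * t) * e 0) atTop (nhds 0) := by
      have h1 : Tendsto (fun t : ℝ => -(Fw / V) * t) atTop atBot := by
        have h0 := (tendsto_const_mul_atTop_of_pos (div_pos hFw hV)).mpr (tendsto_id (α := ℝ))
        simpa using tendsto_neg_atBot_iff.mpr h0
      have h2 : Tendsto (fun t : ℝ => Real.exp (-(Fw / V) * t)) atTop (nhds 0) :=
        Real.tendsto_exp_atBot.comp h1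
      simpa using h2.mul_const (e 0)
    refine hlim.congr fun t => ?_
    rw [hzz t, hformula t]
end

section
/- (Proposition 3, sufficiency.) Consider the cascade of the plant dx/dt = F(x) + G(x) Q x_o and fault exo-system dx_o/dt = R x_o, with measured output Y(x, x_o) = H(x) + J(x) Q x_o and quantity to estimate z = Q x_o. Suppose there exist row vectors β₀, …, β_v ∈ ℝ^{1×p} such that Σ_{ℓ=0}^{v} L_{F_e}^{v−ℓ}(β_ℓ Y)(x, x_o) = Q(R^v + α₁ R^{v−1} + ⋯ + α_{v−1} R + α_v I) x_o for all (x, x_o) ∈ ℝ^n × ℝ^{n_o}. Then the map T : ℝ^{n+n_o} → ℝ^v with components T_k(x, x_o) = Q(R^{v−k} + α₁ R^{v−k−1} + ⋯ + α_{v−k} I) x_o − Σ_{ℓ=0}^{v−k} L_{F_e}^{v−k−ℓ}(β_ℓ Y)(x, x_o), k = 1,…,v, satisfies the observer conditions (∂T/∂x)(F + G Q x_o) + (∂T/∂x_o) R x_o = A T + B Y and C T + D Y = Q x_o on ℝ^{n+n_o}, where A is the companion matrix with subdiagonal ones and last column (−α_v, …, −α_1)ᵀ, B has k-th row β_{v−k+1}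 − α_{v−k+1} β₀, C = (0,…,0,1), and D = β₀. -/
open Matrix Finset

/-- Lie derivative of a scalar function `φ` on the extended state space `ℝ^n × ℝ^{n_o}`
along the extended drift `F_e(x, x_o) = (F(x) + G(x) Q x_o, R x_o)`. -/
noncomputable def lieFe {n no : ℕ} (F G : (Fin n → ℝ) → (Fin n → ℝ))
    (R : Matrix (Fin no) (Fin no) ℝ) (Q : Fin no → ℝ)
    (φ : (Fin n → ℝ) × (Fin no → ℝ) → ℝ) : (Fin n → ℝ) × (Fin no → ℝ) → ℝ :=
  fun w => fderiv ℝ φ w (F w.1 + (Q ⬝ᵥ w.2) • G w.1, R.mulVec w.2)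

/-- dot product of a constant vector with a smooth map is smooth -/
lemma stmt11_dot_smooth {E : Type*} [NormedAddCommGroup E] [NormedSpace ℝ E]
    {q : ℕ} (c : Fin q → ℝ) {Z : E → Fin q → ℝ} (hZ : ContDiff ℝ (⊤ : ℕ∞) Z) :
    ContDiff ℝ (⊤ : ℕ∞) (fun u => c ⬝ᵥ Z u) := by
  simp only [dotProduct]
  exact ContDiff.sum fun i _ => contDiff_const.mul (contDiff_pi.mp hZ i)

/-- the linear map `w ↦ Q ⬝ᵥ M.mulVec w.2` as a continuous linear map -/
noncomputable def stmt11_qmv {n no : ℕ} (Q : Fin no → ℝ) (M : Matrix (Fin no) (Fin no) ℝ) :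
    ((Fin n → ℝ) × (Fin no → ℝ)) →L[ℝ] ℝ :=
  LinearMap.toContinuousLinearMap
    { toFun := fun w => Q ⬝ᵥ M.mulVec w.2
      map_add' := by
        intro a b
        simp [Matrix.mulVec_add, dotProduct_add]
      map_smul' := by
        intro c a
        simp [Matrix.mulVec_smul, dotProduct_smul] }

lemma stmt11_qmv_apply {n no : ℕ} (Q : Fin no → ℝ) (M : Matrix (Fin no) (Fin no) ℝ)
    (w : (Fin n → ℝ) × (Fin no → ℝ)) : stmt11_qmv Q M w = Q ⬝ᵥ M.mulVec w.2 := by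
  simp [stmt11_qmv]

lemma stmt11_fderiv_qmv {n no : ℕ} (Q : Fin no → ℝ) (M : Matrix (Fin no) (Fin no) ℝ)
    (w : (Fin n → ℝ) × (Fin no → ℝ)) :
    fderiv ℝ (fun w : (Fin n → ℝ) × (Fin no → ℝ) => Q ⬝ᵥ M.mulVec w.2) w
      = stmt11_qmv Q M := by
  have h : (fun w : (Fin n → ℝ) × (Fin no → ℝ) => Q ⬝ᵥ M.mulVec w.2)
      = fun w => stmt11_qmv Q M w := by
    funext u; rw [stmt11_qmv_apply]
  rw [h]
  exact (stmt11_qmv Q M).fderiv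

lemma stmt11_diff_qmv {n no : ℕ} (Q : Fin no → ℝ) (M : Matrix (Fin no) (Fin no) ℝ)
    (w : (Fin n → ℝ) × (Fin no → ℝ)) :
    DifferentiableAt ℝ (fun w : (Fin n → ℝ) × (Fin no → ℝ) => Q ⬝ᵥ M.mulVec w.2) w := by
  have h : (fun w : (Fin n → ℝ) × (Fin no → ℝ) => Q ⬝ᵥ M.mulVec w.2)
      = fun w => stmt11_qmv Q M w := by
    funext u; rw [stmt11_qmv_apply]
  rw [h]
  exact (stmt11_qmv Q M).differentiableAt

/-- the extended drift vector field is smooth -/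
lemma stmt11_X_smooth {n no : ℕ} {F G : (Fin n → ℝ) → (Fin n → ℝ)}
    (hF : ContDiff ℝ (⊤ : ℕ∞) F) (hG : ContDiff ℝ (⊤ : ℕ∞) G)
    (R : Matrix (Fin no) (Fin no) ℝ) (Q : Fin no → ℝ) :
    ContDiff ℝ (⊤ : ℕ∞) (fun w : (Fin n → ℝ) × (Fin no → ℝ) =>
      (F w.1 + (Q ⬝ᵥ w.2) • G w.1, R.mulVec w.2)) := by
  apply ContDiff.prodMk
  · exact (hF.comp contDiff_fst).add
      ((stmt11_dot_smooth Q contDiff_snd).smul (hG.comp contDiff_fst))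
  · exact contDiff_pi.mpr fun i => stmt11_dot_smooth (R i) contDiff_snd

/-- the Lie derivative of a smooth function is smooth -/
lemma stmt11_lie_smooth {n no : ℕ} {F G : (Fin n → ℝ) → (Fin n → ℝ)}
    (hF : ContDiff ℝ (⊤ : ℕ∞) F) (hG : ContDiff ℝ (⊤ : ℕ∞) G)
    (R : Matrix (Fin no) (Fin no) ℝ) (Q : Fin no → ℝ)
    {φ : (Fin n → ℝ) × (Fin no → ℝ) → ℝ} (hφ : ContDiff ℝ (⊤ : ℕ∞) φ) :
    ContDiff ℝ (⊤ : ℕ∞) (lieFe F G R Q φ) :=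
  (hφ.fderiv_right (by simp)).clm_apply (stmt11_X_smooth hF hG R Q)

lemma stmt11_iter_smooth {n no : ℕ} {F G : (Fin n → ℝ) → (Fin n → ℝ)}
    (hF : ContDiff ℝ (⊤ : ℕ∞) F) (hG : ContDiff ℝ (⊤ : ℕ∞) G)
    (R : Matrix (Fin no) (Fin no) ℝ) (Q : Fin no → ℝ)
    {φ : (Fin n → ℝ) × (Fin no → ℝ) → ℝ} (hφ : ContDiff ℝ (⊤ : ℕ∞) φ) (j : ℕ) :
    ContDiff ℝ (⊤ : ℕ∞) ((lieFe F G R Q)^[j] φ) := by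
  induction j with
  | zero => exact hφ
  | succ j ih =>
    rw [Function.iterate_succ_apply']
    exact stmt11_lie_smooth hF hG R Q ih

/-- **Proposition 3, sufficiency.** For the cascade of the plant
`dx/dt = F(x) + G(x) Q x_o` and the fault exo-system `dx_o/dt = R x_o` with measured
output `Y(x, x_o) = H(x) + J(x) Q x_o` and quantity to estimate `z = Q x_o`: if there are
row vectors `β₀, …, β_v` with
`Σ_{ℓ=0}^{v} L_{F_e}^{v−ℓ}(β_ℓ Y) = Q(R^v + α₁ R^{v−1} + ⋯ + α_v I) x_o`, then the map `T`
with components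
`T_k = Q(R^{v−k} + α₁ R^{v−k−1} + ⋯ + α_{v−k} I) x_o − Σ_{ℓ=0}^{v−k} L_{F_e}^{v−k−ℓ}(β_ℓ Y)`
satisfies the observer conditions
`(∂T/∂x)(F + G Q x_o) + (∂T/∂x_o) R x_o = A T + B Y` and `C T + D Y = Q x_o`, with the
companion matrix `A`, `B` with `k`-th row `β_{v−k+1} − α_{v−k+1} β₀`, `C = (0,…,0,1)`,
`D = β₀`. -/
theorem stmt11
    {n no v p : ℕ} (hv : 0 < v)
    (F : (Fin n → ℝ) → (Fin n → ℝ)) (hF : ContDiff ℝ (⊤ : ℕ∞) F)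
    (G : (Fin n → ℝ) → (Fin n → ℝ)) (hG : ContDiff ℝ (⊤ : ℕ∞) G)
    (H : (Fin n → ℝ) → (Fin p → ℝ)) (hH : ContDiff ℝ (⊤ : ℕ∞) H)
    (J : (Fin n → ℝ) → (Fin p → ℝ)) (hJ : ContDiff ℝ (⊤ : ℕ∞) J)
    (R : Matrix (Fin no) (Fin no) ℝ) (Q : Fin no → ℝ)
    (Y : (Fin n → ℝ) × (Fin no → ℝ) → (Fin p → ℝ))
    (hY : Y = fun w => H w.1 + (Q ⬝ᵥ w.2) • J w.1)
    (α : ℕ → ℝ) (β : ℕ → (Fin p → ℝ))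
    (hcond : ∀ w : (Fin n → ℝ) × (Fin no → ℝ),
      ∑ ℓ ∈ Finset.range (v + 1),
          (lieFe F G R Q)^[v - ℓ] (fun u => β ℓ ⬝ᵥ Y u) w
        = Q ⬝ᵥ ((R ^ v + ∑ i ∈ Finset.Icc 1 v, α i • R ^ (v - i)).mulVec w.2)) :
    ∀ (T : (Fin n → ℝ) × (Fin no → ℝ) → (Fin v → ℝ)),
      (T = fun (w : (Fin n → ℝ) × (Fin no → ℝ)) (k : Fin v) =>
        Q ⬝ᵥ ((R ^ (v - 1 - (k : ℕ))
              + ∑ i ∈ Finset.Icc 1 (v - 1 - (k : ℕ)), α i • R ^ (v - 1 - (k : ℕ) - i)).mulVec w.2)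
          - ∑ ℓ ∈ Finset.range (v - 1 - (k : ℕ) + 1),
              (lieFe F G R Q)^[v - 1 - (k : ℕ) - ℓ] (fun u => β ℓ ⬝ᵥ Y u) w) →
    ∀ (A : Matrix (Fin v) (Fin v) ℝ),
      (A = fun (i j : Fin v) => (if (i : ℕ) = (j : ℕ) + 1 then (1 : ℝ) else 0)
          + (if (j : ℕ) = v - 1 then -α (v - (i : ℕ)) else 0)) →
    ∀ (B : Matrix (Fin v) (Fin p) ℝ),
      (B = fun (k : Fin v) (j : Fin p) => β (v - (k : ℕ)) j - α (v - (k : ℕ)) * β 0 j) →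
    ∀ (C : Fin v → ℝ), (C = fun (j : Fin v) => if (j : ℕ) = v - 1 then (1 : ℝ) else 0) →
    ∀ (D : Fin p → ℝ), (D = β 0) →
      (∀ w : (Fin n → ℝ) × (Fin no → ℝ),
        fderiv ℝ T w (F w.1 + (Q ⬝ᵥ w.2) • G w.1, R.mulVec w.2)
          = A.mulVec (T w) + B.mulVec (Y w)) ∧
      (∀ w : (Fin n → ℝ) × (Fin no → ℝ),
        C ⬝ᵥ T w + D ⬝ᵥ Y w = Q ⬝ᵥ w.2) := by
  intro T hT A hA B hB C hC D hD
  subst hT hA hB hC hD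
  -- smoothness facts
  have hYs : ContDiff ℝ (⊤ : ℕ∞) Y := by
    rw [hY]
    exact (hH.comp contDiff_fst).add
      ((stmt11_dot_smooth Q contDiff_snd).smul (hJ.comp contDiff_fst))
  have hφ : ∀ ℓ : ℕ, ContDiff ℝ (⊤ : ℕ∞) (fun u => β ℓ ⬝ᵥ Y u) := fun ℓ =>
    stmt11_dot_smooth (β ℓ) hYs
  have hiter : ∀ (ℓ j : ℕ), ContDiff ℝ (⊤ : ℕ∞) ((lieFe F G R Q)^[j] (fun u => β ℓ ⬝ᵥ Y u)) :=
    fun ℓ j => stmt11_iter_smooth hF hG R Q (hφ ℓ) j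
  -- the matrix polynomial
  set P : ℕ → Matrix (Fin no) (Fin no) ℝ :=
    fun m => R ^ m + ∑ i ∈ Finset.Icc 1 m, α i • R ^ (m - i) with hP
  have hPapp : ∀ m : ℕ, R ^ m + ∑ i ∈ Finset.Icc 1 m, α i • R ^ (m - i) = P m :=
    fun m => rfl
  -- matrix identity : P m * R = P (m+1) - α (m+1) • 1
  have hmat : ∀ m : ℕ, P m * R = P (m + 1) - α (m + 1) • (1 : Matrix (Fin no) (Fin no) ℝ) := by
    intro m
    have h1 : ∑ i ∈ Finset.Icc 1 m, (α i • R ^ (m - i)) * R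
        = ∑ i ∈ Finset.Icc 1 m, α i • R ^ (m + 1 - i) := by
      refine Finset.sum_congr rfl fun i hi => ?_
      have hi' := Finset.mem_Icc.mp hi
      rw [smul_mul_assoc, ← pow_succ]
      congr 2
      omega
    have h2 : ∑ i ∈ Finset.Icc 1 (m + 1), α i • R ^ (m + 1 - i)
        = ∑ i ∈ Finset.Icc 1 m, α i • R ^ (m + 1 - i)
          + α (m + 1) • R ^ (m + 1 - (m + 1)) :=
      Finset.sum_Icc_succ_top (by omega) _
    simp only [hP, add_mul, Finset.sum_mul, h1, ← pow_succ, h2, Nat.sub_self, pow_zero]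
    abel
  -- differentiability of each component summand
  have hds : ∀ (m : ℕ) (w : (Fin n → ℝ) × (Fin no → ℝ)),
      DifferentiableAt ℝ
        (fun w => ∑ ℓ ∈ Finset.range (m + 1),
          (lieFe F G R Q)^[m - ℓ] (fun u => β ℓ ⬝ᵥ Y u) w) w := by
    intro m w
    exact DifferentiableAt.fun_sum fun ℓ _ =>
      ((hiter ℓ (m - ℓ)).differentiable (by simp)).differentiableAt
  have hdk : ∀ (m : ℕ) (w : (Fin n → ℝ) × (Fin no → ℝ)),
      DifferentiableAt ℝ
        (fun w => Q ⬝ᵥ ((P m).mulVec w.2)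
          - ∑ ℓ ∈ Finset.range (m + 1),
              (lieFe F G R Q)^[m - ℓ] (fun u => β ℓ ⬝ᵥ Y u) w) w := by
    intro m w
    exact (stmt11_diff_qmv Q (P m) w).sub (hds m w)
  -- key computation for the Lie derivative of each component
  have key : ∀ (m : ℕ) (w : (Fin n → ℝ) × (Fin no → ℝ)),
      fderiv ℝ (fun w => Q ⬝ᵥ ((P m).mulVec w.2)
          - ∑ ℓ ∈ Finset.range (m + 1),
              (lieFe F G R Q)^[m - ℓ] (fun u => β ℓ ⬝ᵥ Y u) w) w
        (F w.1 + (Q ⬝ᵥ w.2) • G w.1, R.mulVec w.2)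
      = (Q ⬝ᵥ ((P (m + 1)).mulVec w.2)
          - ∑ ℓ ∈ Finset.range (m + 2),
              (lieFe F G R Q)^[m + 1 - ℓ] (fun u => β ℓ ⬝ᵥ Y u) w)
        + (β (m + 1) ⬝ᵥ Y w - α (m + 1) * (Q ⬝ᵥ w.2)) := by
    intro m w
    rw [fderiv_fun_sub (stmt11_diff_qmv Q (P m) w) (hds m w)]
    rw [ContinuousLinearMap.sub_apply]
    rw [stmt11_fderiv_qmv]
    rw [fderiv_fun_sum fun ℓ _ => ((hiter ℓ (m - ℓ)).differentiable (by simp)).differentiableAt]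
    rw [ContinuousLinearMap.sum_apply]
    have hsum : ∑ ℓ ∈ Finset.range (m + 1),
        fderiv ℝ ((lieFe F G R Q)^[m - ℓ] (fun u => β ℓ ⬝ᵥ Y u)) w
          (F w.1 + (Q ⬝ᵥ w.2) • G w.1, R.mulVec w.2)
        = ∑ ℓ ∈ Finset.range (m + 2),
            (lieFe F G R Q)^[m + 1 - ℓ] (fun u => β ℓ ⬝ᵥ Y u) w
          - β (m + 1) ⬝ᵥ Y w := by
      have h1 : ∀ ℓ ∈ Finset.range (m + 1),
          fderiv ℝ ((lieFe F G R Q)^[m - ℓ] (fun u => β ℓ ⬝ᵥ Y u)) w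
            (F w.1 + (Q ⬝ᵥ w.2) • G w.1, R.mulVec w.2)
          = (lieFe F G R Q)^[m + 1 - ℓ] (fun u => β ℓ ⬝ᵥ Y u) w := by
        intro ℓ hℓ
        have hl : ℓ ≤ m := Nat.lt_succ_iff.mp (Finset.mem_range.mp hℓ)
        have he : m + 1 - ℓ = (m - ℓ) + 1 := by omega
        rw [he, Function.iterate_succ_apply']
        rfl
      rw [Finset.sum_congr rfl h1,
        Finset.sum_range_succ
          (fun ℓ => (lieFe F G R Q)^[m + 1 - ℓ] (fun u => β ℓ ⬝ᵥ Y u) w) (m + 1)]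
      simp
    rw [hsum]
    have hlin : (stmt11_qmv (n := n) Q (P m)) (F w.1 + (Q ⬝ᵥ w.2) • G w.1, R.mulVec w.2)
        = Q ⬝ᵥ ((P (m + 1)).mulVec w.2) - α (m + 1) * (Q ⬝ᵥ w.2) := by
      rw [stmt11_qmv_apply]
      show Q ⬝ᵥ (P m).mulVec (R.mulVec w.2) = _
      rw [Matrix.mulVec_mulVec, hmat m, Matrix.sub_mulVec, dotProduct_sub,
        smul_mulVec, Matrix.one_mulVec, dotProduct_smul, smul_eq_mul]
    rw [hlin]
    ring
  constructor
  · -- the ODE condition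
    intro w
    simp only [hPapp]
    rw [fderiv_pi (fun k : Fin v => hdk (v - 1 - (k : ℕ)) w)]
    funext k
    rw [ContinuousLinearMap.pi_apply, key (v - 1 - (k : ℕ)) w]
    have hk : (k : ℕ) < v := k.isLt
    have hk1 : v - 1 - (k : ℕ) + 1 = v - (k : ℕ) := by omega
    have hk2 : v - 1 - (k : ℕ) + 2 = v - (k : ℕ) + 1 := by omega
    rw [hk1, hk2]
    -- the components of T as a function of the index
    set tt : Fin v → ℝ := fun j =>
      Q ⬝ᵥ ((P (v - 1 - (j : ℕ))).mulVec w.2)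
        - ∑ ℓ ∈ Finset.range (v - 1 - (j : ℕ) + 1),
            (lieFe F G R Q)^[v - 1 - (j : ℕ) - ℓ] (fun u => β ℓ ⬝ᵥ Y u) w with htt
    have hlast : (v - 1 : ℕ) < v := by omega
    set wlast : Fin v := ⟨v - 1, hlast⟩ with hwl
    have hTlast : tt wlast = Q ⬝ᵥ w.2 - β 0 ⬝ᵥ Y w := by
      have h0 : v - 1 - ((wlast : Fin v) : ℕ) = 0 := by simp [hwl]
      rw [htt]
      simp only [h0]
      simp [hP, Matrix.one_mulVec]
    rw [Pi.add_apply]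
    have hmvA : ∀ (M : Matrix (Fin v) (Fin v) ℝ) (x : Fin v → ℝ),
        (M.mulVec x) k = ∑ j : Fin v, M k j * x j := fun M x => rfl
    have hmvB : ∀ (M : Matrix (Fin v) (Fin p) ℝ) (x : Fin p → ℝ),
        (M.mulVec x) k = ∑ j : Fin p, M k j * x j := fun M x => rfl
    erw [hmvA, hmvB]
    -- B part
    have hB : ∑ j : Fin p,
        (fun (k : Fin v) (j : Fin p) => β (v - (k : ℕ)) j - α (v - (k : ℕ)) * β 0 j) k j
          * Y w j
        = β (v - (k : ℕ)) ⬝ᵥ Y w - α (v - (k : ℕ)) * (β 0 ⬝ᵥ Y w) := by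
      simp only [dotProduct, Finset.mul_sum, ← Finset.sum_sub_distrib]
      refine Finset.sum_congr rfl fun j _ => by ring
    -- A part : split the row sum
    have hAsum : ∑ j : Fin v,
        (fun (i j : Fin v) => (if (i : ℕ) = (j : ℕ) + 1 then (1 : ℝ) else 0)
          + (if (j : ℕ) = v - 1 then -α (v - (i : ℕ)) else 0)) k j * tt j
        = ∑ j : Fin v, (if (k : ℕ) = (j : ℕ) + 1 then (1 : ℝ) else 0) * tt j
          + ∑ j : Fin v, (if (j : ℕ) = v - 1 then -α (v - (k : ℕ)) else 0) * tt j := by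
      rw [← Finset.sum_add_distrib]
      exact Finset.sum_congr rfl fun j _ => by
        show ((if (k : ℕ) = (j : ℕ) + 1 then (1 : ℝ) else 0)
          + (if (j : ℕ) = v - 1 then -α (v - (k : ℕ)) else 0)) * tt j = _
        ring
    have hA2 : ∑ j : Fin v, (if (j : ℕ) = v - 1 then -α (v - (k : ℕ)) else 0) * tt j
        = -α (v - (k : ℕ)) * (Q ⬝ᵥ w.2 - β 0 ⬝ᵥ Y w) := by
      rw [Finset.sum_eq_single wlast]
      · rw [if_pos (by simp [hwl]), hTlast]
      · intro j _ hj
        rw [if_neg, zero_mul]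
        intro hc
        exact hj (Fin.ext (by simp [hwl, hc]))
      · intro hc
        exact absurd (Finset.mem_univ wlast) hc
    rw [hAsum, hA2, hB]
    rcases Nat.eq_zero_or_pos (k : ℕ) with hk0 | hk0
    · -- first row : uses the main hypothesis hcond
      have hA1 : ∑ j : Fin v, (if (k : ℕ) = (j : ℕ) + 1 then (1 : ℝ) else 0) * tt j
          = 0 := by
        refine Finset.sum_eq_zero fun j _ => ?_
        rw [if_neg (by omega), zero_mul]
      have hcond' := hcond w
      rw [hPapp] at hcond'
      rw [hA1, hk0]
      simp only [Nat.sub_zero]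
      rw [← hcond']
      ring
    · -- other rows : subdiagonal entry of A
      have hj0 : (k : ℕ) - 1 < v := by omega
      set j0 : Fin v := ⟨(k : ℕ) - 1, hj0⟩ with hj0'
      have hA1 : ∑ j : Fin v, (if (k : ℕ) = (j : ℕ) + 1 then (1 : ℝ) else 0) * tt j
          = tt j0 := by
        rw [Finset.sum_eq_single j0]
        · rw [if_pos (by simp [hj0']; omega), one_mul]
        · intro j _ hj
          rw [if_neg, zero_mul]
          intro hc
          exact hj (Fin.ext (by simp [hj0']; omega))
        · intro hc
          exact absurd (Finset.mem_univ j0) hc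
      have htt0 : tt j0 = Q ⬝ᵥ ((P (v - (k : ℕ))).mulVec w.2)
          - ∑ ℓ ∈ Finset.range (v - (k : ℕ) + 1),
              (lieFe F G R Q)^[v - (k : ℕ) - ℓ] (fun u => β ℓ ⬝ᵥ Y u) w := by
        rw [htt]
        show Q ⬝ᵥ ((P (v - 1 - ((k : ℕ) - 1))).mulVec w.2)
          - ∑ ℓ ∈ Finset.range (v - 1 - ((k : ℕ) - 1) + 1),
              (lieFe F G R Q)^[v - 1 - ((k : ℕ) - 1) - ℓ] (fun u => β ℓ ⬝ᵥ Y u) w = _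
        rw [show v - 1 - ((k : ℕ) - 1) = v - (k : ℕ) by omega]
      rw [hA1, htt0]
      ring
  · -- the output condition
    intro w
    simp only [hPapp]
    have hlast : (v - 1 : ℕ) < v := by omega
    have hC : ∑ j : Fin v, (if (j : ℕ) = v - 1 then (1:ℝ) else 0)
          * ((fun (w : (Fin n → ℝ) × (Fin no → ℝ)) (k : Fin v) =>
            Q ⬝ᵥ ((P (v - 1 - (k : ℕ))).mulVec w.2)
              - ∑ ℓ ∈ Finset.range (v - 1 - (k : ℕ) + 1),
                  (lieFe F G R Q)^[v - 1 - (k : ℕ) - ℓ] (fun u => β ℓ ⬝ᵥ Y u) w) w j)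
        = Q ⬝ᵥ w.2 - β 0 ⬝ᵥ Y w := by
      rw [Finset.sum_eq_single (⟨v - 1, hlast⟩ : Fin v)]
      · rw [if_pos rfl, one_mul]
        have h0 : v - 1 - ((⟨v - 1, hlast⟩ : Fin v) : ℕ) = 0 := by simp
        simp only [h0]
        simp [hP, Matrix.one_mulVec]
      · intro j _ hj
        rw [if_neg, zero_mul]
        intro hc
        exact hj (Fin.ext (by simp [hc]))
      · intro hc
        exact absurd (Finset.mem_univ _) hc
    show (fun j : Fin v => if (j : ℕ) = v - 1 then (1:ℝ) else 0) ⬝ᵥ _ + β 0 ⬝ᵥ Y w = Q ⬝ᵥ w.2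
    simp only [dotProduct] at hC ⊢
    rw [hC]  -- may need shape matching
    ring
end

section
/- (Proposition 3, necessity.) Consider the cascade system dx/dt = F(x) + G(x) Q x_o, dx_o/dt = R x_o, with output Y(x, x_o) = H(x) + J(x) Q x_o and z = Q x_o. If there exist a C¹ map T : ℝ^{n+n_o} → ℝ^v and matrices A ∈ ℝ^{v×v} (with characteristic polynomial λ^v + α₁ λ^{v−1} + ⋯ + α_v), B ∈ ℝ^{v×p}, C ∈ ℝ^{1×v}, D ∈ ℝ^{1×p} such that (∂T/∂x)(F + G Q x_o) + (∂T/∂x_o) R x_o = A T + B Y and C T + D Y = Q x_o hold identically, then there exist row vectors β₀, …, β_v ∈ ℝ^{1×p} such that Σ_{ℓ=0}^{v} L_{F_e}^{v−ℓ}(β_ℓ Y)(x, x_o) = Q(R^v + α₁ R^{v−1} + ⋯ + α_{v−1} R + α_v I) x_o for all (x, x_o). -/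
open Matrix Finset

namespace Stmt12Aux

/-- dot product with a fixed vector, as a continuous linear map -/
noncomputable def dvec {m : ℕ} (u : Fin m → ℝ) : (Fin m → ℝ) →L[ℝ] ℝ :=
  LinearMap.toContinuousLinearMap
    { toFun := fun x => u ⬝ᵥ x
      map_add' := fun x y => dotProduct_add u x y
      map_smul' := fun c x => by simp [dotProduct_smul] }

@[simp] lemma dvec_apply {m : ℕ} (u x : Fin m → ℝ) : dvec u x = u ⬝ᵥ x := rfl

variable {n no : ℕ} (F G : (Fin n → ℝ) → (Fin n → ℝ))
  (R : Matrix (Fin no) (Fin no) ℝ) (Q : Fin no → ℝ)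

/-- the extended drift vector field -/
noncomputable def V : (Fin n → ℝ) × (Fin no → ℝ) → (Fin n → ℝ) × (Fin no → ℝ) :=
  fun w => (F w.1 + (Q ⬝ᵥ w.2) • G w.1, R.mulVec w.2)

lemma lie_apply (φ : (Fin n → ℝ) × (Fin no → ℝ) → ℝ) (w) :
    lieFe F G R Q φ w = fderiv ℝ φ w (V F G R Q w) := rfl

lemma dsnd_smooth : ContDiff ℝ (⊤:ℕ∞) (fun w : (Fin n → ℝ) × (Fin no → ℝ) => Q ⬝ᵥ w.2) :=
  (dvec Q).contDiff.comp contDiff_snd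

lemma V_smooth (hF : ContDiff ℝ (⊤:ℕ∞) F) (hG : ContDiff ℝ (⊤:ℕ∞) G) :
    ContDiff ℝ (⊤:ℕ∞) (V F G R Q) := by
  apply ContDiff.prodMk
  · exact (hF.comp contDiff_fst).add ((dsnd_smooth Q).smul (hG.comp contDiff_fst))
  · exact (LinearMap.toContinuousLinearMap R.mulVecLin).contDiff.comp contDiff_snd

variable (hF : ContDiff ℝ (⊤:ℕ∞) F) (hG : ContDiff ℝ (⊤:ℕ∞) G)

lemma lie_add {φ ψ : (Fin n → ℝ) × (Fin no → ℝ) → ℝ} {w}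
    (hφ : DifferentiableAt ℝ φ w) (hψ : DifferentiableAt ℝ ψ w) :
    lieFe F G R Q (fun u => φ u + ψ u) w = lieFe F G R Q φ w + lieFe F G R Q ψ w := by
  simp [lieFe, fderiv_fun_add hφ hψ]


lemma lie_sub {φ ψ : (Fin n → ℝ) × (Fin no → ℝ) → ℝ} {w}
    (hφ : DifferentiableAt ℝ φ w) (hψ : DifferentiableAt ℝ ψ w) :
    lieFe F G R Q (fun u => φ u - ψ u) w = lieFe F G R Q φ w - lieFe F G R Q ψ w := by
  simp [lieFe, fderiv_fun_sub hφ hψ]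


lemma lie_const_mul {φ : (Fin n → ℝ) × (Fin no → ℝ) → ℝ} {w} (c : ℝ)
    (hφ : DifferentiableAt ℝ φ w) :
    lieFe F G R Q (fun u => c * φ u) w = c * lieFe F G R Q φ w := by
  simp [lieFe, fderiv_const_mul hφ c]


lemma lie_sum {ι : Type*} (s : Finset ι) (f : ι → (Fin n → ℝ) × (Fin no → ℝ) → ℝ) {w}
    (h : ∀ i ∈ s, DifferentiableAt ℝ (f i) w) :
    lieFe F G R Q (fun u => ∑ i ∈ s, f i u) w = ∑ i ∈ s, lieFe F G R Q (f i) w := by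
  simp [lieFe, fderiv_fun_sum h]


include hF hG

lemma lie_smooth {φ : (Fin n → ℝ) × (Fin no → ℝ) → ℝ} (hφ : ContDiff ℝ (⊤:ℕ∞) φ) :
    ContDiff ℝ (⊤:ℕ∞) (lieFe F G R Q φ) := by
  have h1 : ContDiff ℝ (⊤:ℕ∞) (fderiv ℝ φ) := hφ.fderiv_right (by simp)
  exact h1.clm_apply (V_smooth F G R Q hF hG)





lemma iter_smooth {φ : (Fin n → ℝ) × (Fin no → ℝ) → ℝ} (hφ : ContDiff ℝ (⊤:ℕ∞) φ) (k : ℕ) :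
    ContDiff ℝ (⊤:ℕ∞) ((lieFe F G R Q)^[k] φ) := by
  induction k generalizing φ with
  | zero => exact hφ
  | succ k ih =>
    rw [Function.iterate_succ_apply]
    exact ih (lie_smooth F G R Q hF hG hφ)

lemma iter_add (k : ℕ) (φ ψ : (Fin n → ℝ) × (Fin no → ℝ) → ℝ)
    (hφ : ContDiff ℝ (⊤:ℕ∞) φ) (hψ : ContDiff ℝ (⊤:ℕ∞) ψ) (w) :
    (lieFe F G R Q)^[k] (fun u => φ u + ψ u) w
      = (lieFe F G R Q)^[k] φ w + (lieFe F G R Q)^[k] ψ w := by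
  induction k generalizing φ ψ with
  | zero => rfl
  | succ k ih =>
    rw [Function.iterate_succ_apply, Function.iterate_succ_apply, Function.iterate_succ_apply]
    have h : lieFe F G R Q (fun u => φ u + ψ u)
        = fun u => lieFe F G R Q φ u + lieFe F G R Q ψ u :=
      funext fun u => lie_add F G R Q
        ((hφ.differentiable (by simp)).differentiableAt) ((hψ.differentiable (by simp)).differentiableAt)
    rw [h]
    exact ih _ _ (lie_smooth F G R Q hF hG hφ) (lie_smooth F G R Q hF hG hψ)

lemma iter_sub (k : ℕ) (φ ψ : (Fin n → ℝ) × (Fin no → ℝ) → ℝ)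
    (hφ : ContDiff ℝ (⊤:ℕ∞) φ) (hψ : ContDiff ℝ (⊤:ℕ∞) ψ) (w) :
    (lieFe F G R Q)^[k] (fun u => φ u - ψ u) w
      = (lieFe F G R Q)^[k] φ w - (lieFe F G R Q)^[k] ψ w := by
  induction k generalizing φ ψ with
  | zero => rfl
  | succ k ih =>
    rw [Function.iterate_succ_apply, Function.iterate_succ_apply, Function.iterate_succ_apply]
    have h : lieFe F G R Q (fun u => φ u - ψ u)
        = fun u => lieFe F G R Q φ u - lieFe F G R Q ψ u :=
      funext fun u => lie_sub F G R Q
        ((hφ.differentiable (by simp)).differentiableAt) ((hψ.differentiable (by simp)).differentiableAt)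
    rw [h]
    exact ih _ _ (lie_smooth F G R Q hF hG hφ) (lie_smooth F G R Q hF hG hψ)

lemma iter_const_mul (k : ℕ) (c : ℝ) (φ : (Fin n → ℝ) × (Fin no → ℝ) → ℝ)
    (hφ : ContDiff ℝ (⊤:ℕ∞) φ) (w) :
    (lieFe F G R Q)^[k] (fun u => c * φ u) w = c * (lieFe F G R Q)^[k] φ w := by
  induction k generalizing φ with
  | zero => rfl
  | succ k ih =>
    rw [Function.iterate_succ_apply, Function.iterate_succ_apply]
    have h : lieFe F G R Q (fun u => c * φ u) = fun u => c * lieFe F G R Q φ u :=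
      funext fun u => lie_const_mul F G R Q c ((hφ.differentiable (by simp)).differentiableAt)
    rw [h]
    exact ih _ (lie_smooth F G R Q hF hG hφ)

lemma iter_sum (k : ℕ) {ι : Type*} (s : Finset ι) (f : ι → (Fin n → ℝ) × (Fin no → ℝ) → ℝ)
    (h : ∀ i ∈ s, ContDiff ℝ (⊤:ℕ∞) (f i)) (w) :
    (lieFe F G R Q)^[k] (fun u => ∑ i ∈ s, f i u) w
      = ∑ i ∈ s, (lieFe F G R Q)^[k] (f i) w := by
  induction k generalizing f with
  | zero => rfl
  | succ k ih =>
    rw [Function.iterate_succ_apply]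
    have h1 : lieFe F G R Q (fun u => ∑ i ∈ s, f i u)
        = fun u => ∑ i ∈ s, lieFe F G R Q (f i) u :=
      funext fun u => lie_sum F G R Q s f
        (fun i hi => ((h i hi).differentiable (by simp)).differentiableAt)
    rw [h1]
    have := ih (fun i => lieFe F G R Q (f i)) (fun i hi => lie_smooth F G R Q hF hG (h i hi))
    simpa [Function.iterate_succ_apply] using this

omit hF hG

lemma lie_lin (u : Fin no → ℝ) (w) :
    lieFe F G R Q (fun x : (Fin n → ℝ) × (Fin no → ℝ) => u ⬝ᵥ x.2) w = (u ᵥ* R) ⬝ᵥ w.2 := by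
  have h : (fun x : (Fin n → ℝ) × (Fin no → ℝ) => u ⬝ᵥ x.2)
      = ⇑((dvec u).comp (ContinuousLinearMap.snd ℝ (Fin n → ℝ) (Fin no → ℝ))) := rfl
  rw [lie_apply, h, ContinuousLinearMap.fderiv]
  simp [V, dotProduct_mulVec]

lemma iter_lin (k : ℕ) (u : Fin no → ℝ) (w) :
    (lieFe F G R Q)^[k] (fun x : (Fin n → ℝ) × (Fin no → ℝ) => u ⬝ᵥ x.2) w
      = (u ᵥ* R ^ k) ⬝ᵥ w.2 := by
  induction k generalizing u with
  | zero => simp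
  | succ k ih =>
    rw [Function.iterate_succ_apply]
    have h : lieFe F G R Q (fun x : (Fin n → ℝ) × (Fin no → ℝ) => u ⬝ᵥ x.2)
        = fun x : (Fin n → ℝ) × (Fin no → ℝ) => (u ᵥ* R) ⬝ᵥ x.2 :=
      funext fun x => lie_lin F G R Q u x
    rw [h, ih]
    rw [vecMul_vecMul, ← pow_succ']

lemma sum_dot {m : ℕ} {ι : Type*} (s : Finset ι) (f : ι → Fin m → ℝ) (x : Fin m → ℝ) :
    (∑ i ∈ s, f i) ⬝ᵥ x = ∑ i ∈ s, f i ⬝ᵥ x := by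
  simp only [dotProduct, Finset.sum_apply, Finset.sum_mul]
  exact Finset.sum_comm

lemma vecMul_sumM {m : ℕ} {ι : Type*} (s : Finset ι) (x : Fin m → ℝ)
    (M : ι → Matrix (Fin m) (Fin m) ℝ) :
    x ᵥ* (∑ i ∈ s, M i) = ∑ i ∈ s, x ᵥ* M i := by
  funext j
  simp only [vecMul, dotProduct, Finset.sum_apply, Matrix.sum_apply, Finset.mul_sum]
  exact Finset.sum_comm

lemma vecMul_smulM {m : ℕ} (x : Fin m → ℝ) (a : ℝ) (M : Matrix (Fin m) (Fin m) ℝ) :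
    x ᵥ* (a • M) = a • (x ᵥ* M) := by
  funext j
  simp only [vecMul, dotProduct, Matrix.smul_apply, Pi.smul_apply, smul_eq_mul, Finset.mul_sum]
  exact Finset.sum_congr rfl fun i _ => by ring

lemma Icc_sum_eq {β : Type*} [AddCommMonoid β] (g : ℕ → β) (v : ℕ) :
    ∑ i ∈ Icc 1 v, g i = ∑ i ∈ range v, g (i + 1) := by
  rw [← Finset.Ico_add_one_right_eq_Icc, Finset.sum_Ico_eq_sum_range]
  simp [add_comm]

lemma coeff_sum {m : ℕ} (α : ℕ → ℝ) (v : ℕ) (M : Matrix (Fin m) (Fin m) ℝ) :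
    ∑ k ∈ range (v + 1), (if v - k = 0 then (1:ℝ) else α (v - k)) • M ^ k
      = M ^ v + ∑ i ∈ Icc 1 v, α i • M ^ (v - i) := by
  have h1 : ∑ k ∈ range (v + 1), (if v - k = 0 then (1:ℝ) else α (v - k)) • M ^ k
      = ∑ i ∈ range (v + 1), (if i = 0 then (1:ℝ) else α i) • M ^ (v - i) := by
    rw [← Finset.sum_range_reflect (fun i => (if i = 0 then (1:ℝ) else α i) • M ^ (v - i)) (v + 1)]
    refine Finset.sum_congr rfl fun k hk => ?_
    have hk' : k ≤ v := by simp [Nat.lt_succ_iff] at hk; omega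
    have e1 : v + 1 - 1 - k = v - k := by omega
    have e2 : v - (v - k) = k := by omega
    simp only [e1, e2]
  rw [h1, Finset.sum_range_succ' (fun i => (if i = 0 then (1:ℝ) else α i) • M ^ (v - i)) v]
  have h2 : ∑ i ∈ Icc 1 v, α i • M ^ (v - i)
      = ∑ i ∈ range v, α (i + 1) • M ^ (v - (i + 1)) := by
    rw [Icc_sum_eq (fun i => α i • M ^ (v - i)) v]
  rw [h2]
  simp [add_comm]

lemma ch_zero {v : ℕ} (A : Matrix (Fin v) (Fin v) ℝ) (α : ℕ → ℝ)
    (hchar : A.charpoly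
      = Polynomial.X ^ v + ∑ i ∈ Finset.Icc 1 v, Polynomial.C (α i) * Polynomial.X ^ (v - i)) :
    A ^ v + ∑ i ∈ Icc 1 v, α i • A ^ (v - i) = 0 := by
  have h := A.aeval_self_charpoly
  rw [hchar] at h
  simpa [map_add, map_pow, map_sum, _root_.map_mul, Polynomial.aeval_C, Polynomial.aeval_X,
    Algebra.smul_def] using h

end Stmt12Aux

open Stmt12Aux in
/-- **Proposition 3, necessity.** For the cascade
`dx/dt = F(x) + G(x) Q x_o`, `dx_o/dt = R x_o`, with output
`Y(x, x_o) = H(x) + J(x) Q x_o` and `z = Q x_o`: if a C¹ map `T : ℝ^{n+n_o} → ℝ^v` and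
matrices `A` (with characteristic polynomial `λ^v + α₁ λ^{v−1} + ⋯ + α_v`), `B`, `C`, `D`
satisfy `(∂T/∂x)(F + G Q x_o) + (∂T/∂x_o) R x_o = A T + B Y` and `C T + D Y = Q x_o`
identically, then there are row vectors `β₀, …, β_v` such that
`Σ_{ℓ=0}^{v} L_{F_e}^{v−ℓ}(β_ℓ Y)(x, x_o) = Q(R^v + α₁ R^{v−1} + ⋯ + α_v I) x_o`
for all `(x, x_o)`. -/
theorem stmt12
    {n no v p : ℕ}
    (F : (Fin n → ℝ) → (Fin n → ℝ)) (hF : ContDiff ℝ (⊤ : ℕ∞) F)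
    (G : (Fin n → ℝ) → (Fin n → ℝ)) (hG : ContDiff ℝ (⊤ : ℕ∞) G)
    (H : (Fin n → ℝ) → (Fin p → ℝ)) (hH : ContDiff ℝ (⊤ : ℕ∞) H)
    (J : (Fin n → ℝ) → (Fin p → ℝ)) (hJ : ContDiff ℝ (⊤ : ℕ∞) J)
    (R : Matrix (Fin no) (Fin no) ℝ) (Q : Fin no → ℝ)
    (Y : (Fin n → ℝ) × (Fin no → ℝ) → (Fin p → ℝ))
    (hY : Y = fun w => H w.1 + (Q ⬝ᵥ w.2) • J w.1)
    (α : ℕ → ℝ)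
    (T : (Fin n → ℝ) × (Fin no → ℝ) → (Fin v → ℝ)) (hT : ContDiff ℝ 1 T)
    (A : Matrix (Fin v) (Fin v) ℝ) (B : Matrix (Fin v) (Fin p) ℝ)
    (C : Fin v → ℝ) (D : Fin p → ℝ)
    (hchar : A.charpoly
      = Polynomial.X ^ v + ∑ i ∈ Finset.Icc 1 v, Polynomial.C (α i) * Polynomial.X ^ (v - i))
    (hPDE : ∀ w : (Fin n → ℝ) × (Fin no → ℝ),
      fderiv ℝ T w (F w.1 + (Q ⬝ᵥ w.2) • G w.1, R.mulVec w.2)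
        = A.mulVec (T w) + B.mulVec (Y w))
    (hOut : ∀ w : (Fin n → ℝ) × (Fin no → ℝ), C ⬝ᵥ T w + D ⬝ᵥ Y w = Q ⬝ᵥ w.2) :
    ∃ β : ℕ → (Fin p → ℝ), ∀ w : (Fin n → ℝ) × (Fin no → ℝ),
      ∑ ℓ ∈ Finset.range (v + 1), (lieFe F G R Q)^[v - ℓ] (fun u => β ℓ ⬝ᵥ Y u) w
        = Q ⬝ᵥ ((R ^ v + ∑ i ∈ Finset.Icc 1 v, α i • R ^ (v - i)).mulVec w.2) := by
  classical
  have hF' : ContDiff ℝ (⊤:ℕ∞) F := hF.of_le (by simp)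
  have hG' : ContDiff ℝ (⊤:ℕ∞) G := hG.of_le (by simp)
  have hH' : ContDiff ℝ (⊤:ℕ∞) H := hH.of_le (by simp)
  have hJ' : ContDiff ℝ (⊤:ℕ∞) J := hJ.of_le (by simp)
  have hT' : Differentiable ℝ T := hT.differentiable one_ne_zero
  have hYs : ContDiff ℝ (⊤:ℕ∞) Y := by
    rw [hY]
    exact (hH'.comp contDiff_fst).add ((dsnd_smooth Q).smul (hJ'.comp contDiff_fst))
  set a : ℕ → ℝ := fun s => if s = 0 then (1:ℝ) else α s with ha
  set g : ℕ → Fin p → ℝ := fun j => (C ᵥ* A ^ (j - 1)) ᵥ* B with hg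
  set gY : ℕ → (Fin n → ℝ) × (Fin no → ℝ) → ℝ := fun j u => g j ⬝ᵥ Y u with hgY
  set DY : (Fin n → ℝ) × (Fin no → ℝ) → ℝ := fun u => D ⬝ᵥ Y u with hDY
  set CT : (Fin n → ℝ) × (Fin no → ℝ) → ℝ := fun u => C ⬝ᵥ T u with hCT
  have hgYs : ∀ j, ContDiff ℝ (⊤:ℕ∞) (gY j) := fun j => (dvec (g j)).contDiff.comp hYs
  have hDYs : ContDiff ℝ (⊤:ℕ∞) DY := (dvec D).contDiff.comp hYs
  -- Lie derivative of u ⬝ᵥ T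
  have lie_dotT : ∀ (u : Fin v → ℝ) w, lieFe F G R Q (fun x => u ⬝ᵥ T x) w
      = (u ᵥ* A) ⬝ᵥ T w + (u ᵥ* B) ⬝ᵥ Y w := by
    intro u w
    have hc : (fun x => u ⬝ᵥ T x) = ⇑(dvec u) ∘ T := rfl
    have hd : HasFDerivAt (⇑(dvec u) ∘ T) ((dvec u).comp (fderiv ℝ T w)) w :=
      ((dvec u).hasFDerivAt (x := T w)).comp w (hT' w).hasFDerivAt
    have hfd : fderiv ℝ (fun x => u ⬝ᵥ T x) w = (dvec u).comp (fderiv ℝ T w) := by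
      rw [hc]; exact hd.fderiv
    rw [lie_apply, hfd]
    simp only [ContinuousLinearMap.coe_comp', Function.comp_apply, dvec_apply]
    rw [show fderiv ℝ T w (V F G R Q w) = A.mulVec (T w) + B.mulVec (Y w) from hPDE w]
    rw [dotProduct_add, dotProduct_mulVec, dotProduct_mulVec]
  -- key induction
  have key : ∀ k w, (lieFe F G R Q)^[k] CT w
      = (C ᵥ* A ^ k) ⬝ᵥ T w + ∑ j ∈ Icc 1 k, (lieFe F G R Q)^[k - j] (gY j) w := by
    intro k
    induction k with
    | zero => intro w; simp [hCT]
    | succ k ih =>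
      intro w
      have hrw : (lieFe F G R Q)^[k] CT
          = fun u => (C ᵥ* A ^ k) ⬝ᵥ T u + ∑ j ∈ Icc 1 k, (lieFe F G R Q)^[k - j] (gY j) u :=
        funext fun u => ih u
      have hφd : DifferentiableAt ℝ (fun x => (C ᵥ* A ^ k) ⬝ᵥ T x) w :=
        (((dvec (C ᵥ* A ^ k)).hasFDerivAt (x := T w)).comp w (hT' w).hasFDerivAt).differentiableAt
      have hsum : ∀ j ∈ Icc 1 k, ContDiff ℝ (⊤:ℕ∞) ((lieFe F G R Q)^[k - j] (gY j)) :=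
        fun j _ => iter_smooth F G R Q hF' hG' (hgYs j) (k - j)
      have hψs : ContDiff ℝ (⊤:ℕ∞) (fun x => ∑ j ∈ Icc 1 k, (lieFe F G R Q)^[k - j] (gY j) x) :=
        ContDiff.sum hsum
      calc (lieFe F G R Q)^[k+1] CT w
          = lieFe F G R Q (fun u => (C ᵥ* A ^ k) ⬝ᵥ T u
              + ∑ j ∈ Icc 1 k, (lieFe F G R Q)^[k - j] (gY j) u) w := by
            rw [Function.iterate_succ_apply', hrw]
        _ = lieFe F G R Q (fun u => (C ᵥ* A ^ k) ⬝ᵥ T u) w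
              + lieFe F G R Q (fun u => ∑ j ∈ Icc 1 k, (lieFe F G R Q)^[k - j] (gY j) u) w :=
            lie_add F G R Q hφd (hψs.differentiable (by simp)).differentiableAt
        _ = ((C ᵥ* A ^ k) ᵥ* A) ⬝ᵥ T w + ((C ᵥ* A ^ k) ᵥ* B) ⬝ᵥ Y w
              + ∑ j ∈ Icc 1 k, lieFe F G R Q ((lieFe F G R Q)^[k - j] (gY j)) w := by
            rw [lie_dotT, lie_sum F G R Q _ _
              (fun j hj => ((hsum j hj).differentiable (by simp)).differentiableAt)]
        _ = (C ᵥ* A ^ (k+1)) ⬝ᵥ T w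
              + (gY (k+1) w + ∑ j ∈ Icc 1 k, (lieFe F G R Q)^[(k+1) - j] (gY j) w) := by
            rw [vecMul_vecMul, ← pow_succ]
            have e1 : ∀ j ∈ Icc 1 k, lieFe F G R Q ((lieFe F G R Q)^[k - j] (gY j)) w
                = (lieFe F G R Q)^[(k+1) - j] (gY j) w := by
              intro j hj
              have hj' : (k+1) - j = (k - j) + 1 := by simp [mem_Icc] at hj; omega
              rw [hj', Function.iterate_succ_apply']
            rw [Finset.sum_congr rfl e1]
            have e2 : gY (k+1) w = ((C ᵥ* A ^ k) ᵥ* B) ⬝ᵥ Y w := by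
              simp [hgY, hg]
            rw [e2]; ring
        _ = (C ᵥ* A ^ (k+1)) ⬝ᵥ T w + ∑ j ∈ Icc 1 (k+1), (lieFe F G R Q)^[(k+1) - j] (gY j) w := by
            rw [Finset.sum_Icc_succ_top (by omega : 1 ≤ k + 1)]
            simp [add_comm]
  -- iterates of CT via the output equation
  have hz : ∀ k w, (lieFe F G R Q)^[k] CT w
      = (Q ᵥ* R ^ k) ⬝ᵥ w.2 - (lieFe F G R Q)^[k] DY w := by
    intro k w
    have hCTeq : CT = fun u => (fun x : (Fin n → ℝ) × (Fin no → ℝ) => Q ⬝ᵥ x.2) u - DY u := by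
      funext u
      have := hOut u
      simp only [hCT, hDY]
      linarith
    rw [hCTeq, iter_sub F G R Q hF' hG' k _ _ (dsnd_smooth Q) hDYs, iter_lin]
  -- the row vectors
  refine ⟨fun ℓ => a ℓ • D + ∑ j ∈ Icc 1 ℓ, a (ℓ - j) • g j, ?_⟩
  intro w
  have hexp : ∀ ℓ, (lieFe F G R Q)^[v - ℓ]
        (fun u => (a ℓ • D + ∑ j ∈ Icc 1 ℓ, a (ℓ - j) • g j) ⬝ᵥ Y u) w
      = a ℓ * (lieFe F G R Q)^[v - ℓ] DY w
        + ∑ j ∈ Icc 1 ℓ, a (ℓ - j) * (lieFe F G R Q)^[v - ℓ] (gY j) w := by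
    intro ℓ
    have hfun : (fun u => (a ℓ • D + ∑ j ∈ Icc 1 ℓ, a (ℓ - j) • g j) ⬝ᵥ Y u)
        = fun u => (a ℓ * DY u) + ∑ j ∈ Icc 1 ℓ, a (ℓ - j) * gY j u := by
      funext u
      rw [add_dotProduct, smul_dotProduct, sum_dot]
      simp [hDY, hgY, smul_dotProduct]
    rw [hfun]
    rw [iter_add F G R Q hF' hG' (v - ℓ) _ _ (contDiff_const.mul hDYs)
      (ContDiff.sum fun j _ => contDiff_const.mul (hgYs j)) w]
    rw [iter_const_mul F G R Q hF' hG' (v - ℓ) _ _ hDYs w]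
    rw [iter_sum F G R Q hF' hG' (v - ℓ) _ _ (fun j _ => contDiff_const.mul (hgYs j)) w]
    congr 1
    exact Finset.sum_congr rfl fun j _ => iter_const_mul F G R Q hF' hG' (v - ℓ) _ _ (hgYs j) w
  rw [Finset.sum_congr rfl (fun ℓ _ => hexp ℓ), Finset.sum_add_distrib]
  -- first sum : reflect
  have hS1 : ∑ ℓ ∈ range (v + 1), a ℓ * (lieFe F G R Q)^[v - ℓ] DY w
      = ∑ k ∈ range (v + 1), a (v - k) * (lieFe F G R Q)^[k] DY w := by
    rw [← Finset.sum_range_reflect (fun k => a (v - k) * (lieFe F G R Q)^[k] DY w) (v + 1)]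
    refine Finset.sum_congr rfl fun ℓ hℓ => ?_
    have hℓ' : ℓ ≤ v := by simp [Nat.lt_succ_iff] at hℓ; omega
    have e1 : v + 1 - 1 - ℓ = v - ℓ := by omega
    have e2 : v - (v - ℓ) = ℓ := by omega
    simp only [e1, e2]
  -- second sum : triangle swap
  have hS2 : ∑ ℓ ∈ range (v + 1), ∑ j ∈ Icc 1 ℓ, a (ℓ - j) * (lieFe F G R Q)^[v - ℓ] (gY j) w
      = ∑ k ∈ range (v + 1), ∑ j ∈ Icc 1 k, a (v - k) * (lieFe F G R Q)^[k - j] (gY j) w := by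
    rw [Finset.sum_comm' (t' := Icc 1 v) (s' := fun j => Icc j v)
      (by intro ℓ j; simp only [mem_range, mem_Icc, Nat.lt_succ_iff]; omega)]
    conv_rhs => rw [Finset.sum_comm' (t' := Icc 1 v) (s' := fun j => Icc j v)
      (by intro k j; simp only [mem_range, mem_Icc, Nat.lt_succ_iff]; omega)]
    refine Finset.sum_congr rfl fun j hj => ?_
    refine Finset.sum_nbij' (fun ℓ => v - ℓ + j) (fun k => v - k + j) ?_ ?_ ?_ ?_ ?_
    · intro ℓ hℓ; simp only [mem_Icc] at *; omega
    · intro k hk; simp only [mem_Icc] at *; omega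
    · intro ℓ hℓ; simp only [mem_Icc] at *; omega
    · intro k hk; simp only [mem_Icc] at *; omega
    · intro ℓ hℓ
      simp only [mem_Icc] at hℓ hj
      have e1 : v - (v - ℓ + j) = ℓ - j := by omega
      have e2 : v - ℓ + j - j = v - ℓ := by omega
      rw [e1, e2]
  rw [hS1, hS2, ← Finset.sum_add_distrib]
  have hterm : ∀ k ∈ range (v + 1),
      a (v - k) * (lieFe F G R Q)^[k] DY w
        + ∑ j ∈ Icc 1 k, a (v - k) * (lieFe F G R Q)^[k - j] (gY j) w
      = a (v - k) * ((Q ᵥ* R ^ k) ⬝ᵥ w.2) - a (v - k) * ((C ᵥ* A ^ k) ⬝ᵥ T w) := by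
    intro k _
    rw [← Finset.mul_sum, ← mul_add, ← mul_sub]
    congr 1
    have h1 := key k w
    have h2 := hz k w
    linarith
  rw [Finset.sum_congr rfl hterm, Finset.sum_sub_distrib]
  have hgen : ∀ {m : ℕ} (u x : Fin m → ℝ) (M : Matrix (Fin m) (Fin m) ℝ),
      ∑ k ∈ range (v + 1), a (v - k) * ((u ᵥ* M ^ k) ⬝ᵥ x)
        = (u ᵥ* (M ^ v + ∑ i ∈ Icc 1 v, α i • M ^ (v - i))) ⬝ᵥ x := by
    intro m u x M
    have h3 : ∀ k ∈ range (v + 1), a (v - k) * ((u ᵥ* M ^ k) ⬝ᵥ x)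
        = (u ᵥ* (a (v - k) • M ^ k)) ⬝ᵥ x := by
      intro k _
      rw [vecMul_smulM, smul_dotProduct, smul_eq_mul]
    rw [Finset.sum_congr rfl h3, ← sum_dot, ← vecMul_sumM]
    have h4 : ∑ k ∈ range (v + 1), a (v - k) • M ^ k
        = M ^ v + ∑ i ∈ Icc 1 v, α i • M ^ (v - i) := by
      rw [ha]; exact coeff_sum α v M
    rw [h4]
  rw [hgen Q w.2 R, hgen C (T w) A, ch_zero A α hchar, Matrix.vecMul_zero,
    zero_dotProduct, sub_zero, dotProduct_mulVec]
end
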